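/- arXiv:1201.1521 — 8 statements merged into one kernel-verified Lean document; each statement's English description precedes it below -/
import Mathlib

section
/- For any classical channel N with finite input alphabet X and finite output alphabet Y, and any integer n ≥ 2, the supremum over all families {B_y}_{y∈Y} of Hermitian operators on ℂ^n with 0 ≤ B_y ≤ I of Rad{ Σ_{y∈Y} N(y|x)·B_y }_{x∈X} is equal to the supremum of the same quantity taken only over families {B_y}_{y∈Y} in which every B_y is an orthogonal projection on ℂ^n (i.e., B_y is Hermitian and B_y² = B_y). -/
open scoped Matrix Kronecker BigOperators Matrix.Norms.L2Operator ComplexOrder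
open Matrix Finset

noncomputable section

/-- A classical channel: `N x y` is the probability of output `y` given input `x`. -/
def IsChannel {X Y : Type*} [Fintype Y] (N : X → Y → ℝ) : Prop :=
  (∀ x y, 0 ≤ N x y) ∧ ∀ x, ∑ y, N x y = 1

/-- The unassisted one-shot success probability of a channel. -/
def Succ {X Y : Type*} [Fintype X] [Fintype Y] [Nonempty X]
    (N : X → Y → ℝ) : ℝ :=
  ⨆ z : X × X × (Y → Bool),
    (1 / 2) * (∑ y, if z.2.2 y = false then N z.1 y else 0) +
      (1 / 2) * (∑ y, if z.2.2 y = true then N z.2.1 y else 0)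

/-- A two-part input-output correlation: `D r s p q` is the probability of
outputs `(p, q)` given inputs `(r, s)`. -/
def IsCorrelation {R S P Q : Type*} [Fintype P] [Fintype Q]
    (D : R → S → P → Q → ℝ) : Prop :=
  (∀ r s p q, 0 ≤ D r s p q) ∧ ∀ r s, ∑ p, ∑ q, D r s p q = 1

/-- The non-signaling condition for a two-part correlation. -/
def NonSignaling {R S P Q : Type*} [Fintype P] [Fintype Q]
    (D : R → S → P → Q → ℝ) : Prop :=
  (∀ r p s s', ∑ q, D r s p q = ∑ q, D r s' p q) ∧
    ∀ s q r r', ∑ p, D r s p q = ∑ p, D r' s p q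

/-- `SuccD N D` : the optimal success probability for transmitting one bit
across the channel `N` with the assistance of the correlation `D`, i.e. the
maximum over deterministic protocols `(e, f, g, h)`. -/
def SuccD {X Y R S P Q : Type*} [Fintype X] [Fintype Y] [Fintype R] [Fintype S]
    [Fintype P] [Fintype Q] [DecidableEq P] [DecidableEq Q] [DecidableEq Y]
    [Nonempty X] [Nonempty R] [Nonempty S]
    (N : X → Y → ℝ) (D : R → S → P → Q → ℝ) : ℝ :=
  ⨆ π : (Bool → R) × (Bool → P → X) × (Y → S) × (Y → Q → Bool),
    (1 / 2) * ∑ a : Bool, ∑ p, ∑ y, ∑ q,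
      D (π.1 a) (π.2.2.1 y) p q * N (π.2.1 a p) y *
        (if π.2.2.2 y q = a then 1 else 0)

/-- The non-signaling assisted one-shot success probability: the supremum of
`SuccD N D` over all non-signaling correlations `D` (over all finite alphabets). -/
def SuccNS {X Y : Type*} [Fintype X] [Fintype Y] [DecidableEq Y] [Nonempty X]
    (N : X → Y → ℝ) : ℝ :=
  sSup { v : ℝ | ∃ (nR nS nP nQ : ℕ)
    (D : Fin (nR + 1) → Fin (nS + 1) → Fin nP → Fin nQ → ℝ),
    IsCorrelation D ∧ NonSignaling D ∧ v = SuccD N D }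

/-- Local-deterministic correlations. -/
def IsLocalDet {R S P Q : Type*} [DecidableEq P] [DecidableEq Q]
    (D : R → S → P → Q → ℝ) : Prop :=
  ∃ (φ : R → P) (ψ : S → Q), ∀ r s p q,
    D r s p q = (if p = φ r then 1 else 0) * (if q = ψ s then 1 else 0)

/-- Local correlations: finite convex combinations of local-deterministic ones. -/
def IsLocal {R S P Q : Type*} [DecidableEq P] [DecidableEq Q]
    (D : R → S → P → Q → ℝ) : Prop :=
  ∃ (n : ℕ) (w : Fin n → ℝ) (L : Fin n → R → S → P → Q → ℝ),
    (∀ i, 0 ≤ w i) ∧ (∑ i, w i = 1) ∧ (∀ i, IsLocalDet (L i)) ∧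
      ∀ r s p q, D r s p q = ∑ i, w i * L i r s p q

/-- The local fraction of a correlation. -/
def locFrac {R S P Q : Type*} [Fintype P] [Fintype Q] [DecidableEq P] [DecidableEq Q]
    (D : R → S → P → Q → ℝ) : ℝ :=
  sSup { α : ℝ | 0 ≤ α ∧ α ≤ 1 ∧ ∃ L F : R → S → P → Q → ℝ,
    IsLocal L ∧ IsCorrelation F ∧ NonSignaling F ∧
      ∀ r s p q, D r s p q = α * L r s p q + (1 - α) * F r s p q }

/-- Binary quantum correlations: all four alphabets are `Bool`, and the
correlation arises from local POVM measurements on a shared bipartite state. -/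
def IsBinaryQuantum (D : Bool → Bool → Bool → Bool → ℝ) : Prop :=
  ∃ (nA nB : ℕ)
    (Λ : Matrix (Fin (nA + 1) × Fin (nB + 1)) (Fin (nA + 1) × Fin (nB + 1)) ℂ)
    (A : Bool → Bool → Matrix (Fin (nA + 1)) (Fin (nA + 1)) ℂ)
    (B : Bool → Bool → Matrix (Fin (nB + 1)) (Fin (nB + 1)) ℂ),
    Λ.PosSemidef ∧ Λ.trace = 1 ∧
    (∀ r p, (A r p).PosSemidef) ∧ (∀ r, A r false + A r true = 1) ∧
    (∀ s q, (B s q).PosSemidef) ∧ (∀ s, B s false + B s true = 1) ∧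
    ∀ r s p q, (D r s p q : ℂ) = ((A r p ⊗ₖ B s q) * Λ).trace

/-- The binary-quantum assisted one-shot success probability. -/
def SuccQb {X Y : Type*} [Fintype X] [Fintype Y] [DecidableEq Y] [Nonempty X]
    (N : X → Y → ℝ) : ℝ :=
  sSup { v : ℝ | ∃ D : Bool → Bool → Bool → Bool → ℝ,
    IsBinaryQuantum D ∧ v = SuccD N D }

/-- The radius of a finite family of operators on `ℂ^n`, with respect to the
`ℓ²` operator norm: the minimum over Hermitian `C` of `max_i ‖H i − C‖`. -/
def matRad {n : ℕ} {I : Type*} [Fintype I] [Nonempty I]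
    (H : I → Matrix (Fin n) (Fin n) ℂ) : ℝ :=
  ⨅ C : { C : Matrix (Fin n) (Fin n) ℂ // C.IsHermitian }, ⨆ i, ‖H i - C.1‖

/-- The `n`-dimensional entanglement-assisted one-shot success probability. -/
def SuccQn {X Y : Type*} [Fintype X] [Fintype Y] (n : ℕ) (N : X → Y → ℝ) : ℝ :=
  sSup { v : ℝ | ∃ (Λ : Matrix (Fin n × Fin n) (Fin n × Fin n) ℂ)
      (A : Bool → X → Matrix (Fin n) (Fin n) ℂ)
      (B : Y → Bool → Matrix (Fin n) (Fin n) ℂ),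
      Λ.PosSemidef ∧ Λ.trace = 1 ∧
      (∀ a x, (A a x).PosSemidef) ∧ (∀ a, ∑ x, A a x = 1) ∧
      (∀ y b, (B y b).PosSemidef) ∧ (∀ y, B y false + B y true = 1) ∧
      v = (1 / 2) * ∑ a : Bool, ∑ x, ∑ y,
            N x y * (((A a x ⊗ₖ B y a) * Λ).trace).re }

/-- The channel of Prevedel et al. -/
def Mchan : Fin 4 → Fin 6 → ℝ :=
  ![![1/3, 0, 1/3, 0, 1/3, 0],
    ![1/3, 0, 0, 1/3, 0, 1/3],
    ![0, 1/3, 1/3, 0, 0, 1/3],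
    ![0, 1/3, 0, 1/3, 1/3, 0]]

/-- The mod-2 inner product of the binary representations of `i` and `j`
(restricted to the first `s` bits), as a `Bool` (`true` = 1). -/
def binIP (s i j : ℕ) : Bool :=
  decide ((((Finset.range s).filter fun k => i.testBit k ∧ j.testBit k).card) % 2 = 1)

/-- The output distributions `ℓ_i` of the channel `T`:
`ℓ_i (j, t) = (2^s − 1)⁻¹ · [b_i · b_j = t]`, where the output pair `(j, t)`
with `j ∈ {1, …, 2^s − 1}` is encoded as `(j', t) : Fin (2^s - 1) × Bool`
with `j = j' + 1`, and `t = true` encodes `1`. -/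
def Tchan (s : ℕ) : Fin (2 ^ s) → Fin (2 ^ s - 1) × Bool → ℝ :=
  fun i jt =>
    if binIP s i.val (jt.1.val + 1) = jt.2 then ((2 : ℝ) ^ s - 1)⁻¹ else 0

/-! Every effect `0 ≤ B ≤ 1` is a convex combination of projections: diagonalise `B`; its
eigenvalue vector lies in the cube `[0,1]ⁿ`, the convex hull of the `0/1` vectors, and a unitary
conjugate of a `0/1` diagonal matrix is a projection. Hence a family of effects is a convex
combination of families of projections. The map `B ↦ Rad{∑_y N(y|x) B_y}_x` is convex (a linear
map followed by the radius, which is convex because the centres of a convex combination can be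
combined in the same way), and a convex function on a convex hull is dominated at a point of the
generating set. So every value at effects is bounded by a value at projections, and conversely
projections are effects; two sets of reals dominating each other have the same supremum. -/

open scoped MatrixOrder
open Set

section Effect
variable {𝕜 n : Type*} [RCLike 𝕜] [Fintype n] [DecidableEq n]

theorem Matrix.PosSemidef.eigenvalues_le_one {B : Matrix n n 𝕜} (hB : B.PosSemidef)
    (hB1 : (1 - B).PosSemidef) (i : n) : hB.1.eigenvalues i ≤ 1 := by
  have hle : B ≤ algebraMap ℝ (Matrix n n 𝕜) 1 := by simpa [Matrix.le_iff] using hB1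
  exact (le_algebraMap_iff_spectrum_le hB.1.isSelfAdjoint).mp hle _
    (hB.1.eigenvalues_mem_spectrum_real i)

theorem isStarProjection_diagonal_ofReal {d : n → ℝ} (hd : ∀ i, d i = 0 ∨ d i = 1) :
    IsStarProjection (diagonal ((RCLike.ofReal : ℝ → 𝕜) ∘ d)) := by
  refine ⟨?_, isHermitian_diagonal_iff.2 fun i => RCLike.conj_ofReal _⟩
  rw [IsIdempotentElem, diagonal_mul_diagonal]
  congr 1
  ext i
  rcases hd i with h | h <;> simp [h]

theorem Matrix.PosSemidef.mem_convexHull_isStarProjection {B : Matrix n n 𝕜} (hB : B.PosSemidef)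
    (hB1 : (1 - B).PosSemidef) : B ∈ convexHull ℝ {P : Matrix n n 𝕜 | IsStarProjection P} := by
  let conj := Unitary.conjStarAlgAut ℝ (Matrix n n 𝕜) hB.1.eigenvectorUnitary
  let f : (n → ℝ) →ₗ[ℝ] Matrix n n 𝕜 :=
    conj.toAlgEquiv.toLinearMap ∘ₗ diagonalLinearMap n ℝ 𝕜 ∘ₗ
      LinearMap.compLeft (RCLike.ofRealAm (K := 𝕜)).toLinearMap n
  have hcube : hB.1.eigenvalues ∈ convexHull ℝ (univ.pi fun _ : n => ({0, 1} : Set ℝ)) :=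
    mem_convexHull_pi fun i _ => by
      rw [convexHull_pair, segment_eq_Icc zero_le_one]
      exact ⟨hB.eigenvalues_nonneg i, hB.eigenvalues_le_one hB1 i⟩
  have hfB : f hB.1.eigenvalues = B := by
    conv_rhs => rw [hB.1.spectral_theorem]
    rfl
  rw [← hfB]
  refine convexHull_mono ?_ (f.image_convexHull _ ▸ mem_image_of_mem f hcube)
  rintro _ ⟨d, hd, rfl⟩
  exact (isStarProjection_diagonal_ofReal fun i => hd i trivial).map conj

end Effect

section Radius
variable {n : ℕ} {I : Type*} [Fintype I] [Nonempty I]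

theorem matRad_le_iSup_norm_sub (H : I → Matrix (Fin n) (Fin n) ℂ) {C : Matrix (Fin n) (Fin n) ℂ}
    (hC : C.IsHermitian) : matRad H ≤ ⨆ i, ‖H i - C‖ := by
  refine ciInf_le (f := fun C : { C : Matrix (Fin n) (Fin n) ℂ // C.IsHermitian } =>
    ⨆ i, ‖H i - C.1‖) ⟨0, ?_⟩ ⟨C, hC⟩
  rintro _ ⟨C', rfl⟩
  exact (norm_nonneg _).trans
    (le_ciSup (Finite.bddAbove_range fun i => ‖H i - C'.1‖) (Classical.arbitrary I))

theorem exists_iSup_norm_sub_lt_of_matRad_lt {H : I → Matrix (Fin n) (Fin n) ℂ} {r : ℝ}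
    (hr : matRad H < r) : ∃ C : Matrix (Fin n) (Fin n) ℂ, C.IsHermitian ∧ ⨆ i, ‖H i - C‖ < r := by
  have : Nonempty { C : Matrix (Fin n) (Fin n) ℂ // C.IsHermitian } := ⟨⟨0, isHermitian_zero⟩⟩
  obtain ⟨C, hC⟩ := exists_lt_of_ciInf_lt hr
  exact ⟨C.1, C.2, hC⟩

theorem convexOn_matRad : ConvexOn ℝ univ (matRad : (I → Matrix (Fin n) (Fin n) ℂ) → ℝ) := by
  refine ⟨convex_univ, fun H₁ _ H₂ _ a b ha hb hab => le_of_forall_pos_le_add fun ε hε => ?_⟩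
  obtain ⟨C₁, hC₁, h₁⟩ :=
    exists_iSup_norm_sub_lt_of_matRad_lt (lt_add_of_pos_right (matRad H₁) hε)
  obtain ⟨C₂, hC₂, h₂⟩ :=
    exists_iSup_norm_sub_lt_of_matRad_lt (lt_add_of_pos_right (matRad H₂) hε)
  have hC : (a • C₁ + b • C₂).IsHermitian :=
    ((IsSelfAdjoint.all a).smul hC₁).add ((IsSelfAdjoint.all b).smul hC₂)
  calc matRad (a • H₁ + b • H₂) ≤ ⨆ i, ‖(a • H₁ + b • H₂) i - (a • C₁ + b • C₂)‖ :=
        matRad_le_iSup_norm_sub _ hC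
    _ ≤ a * (matRad H₁ + ε) + b * (matRad H₂ + ε) := ciSup_le fun i => calc
        _ = ‖a • (H₁ i - C₁) + b • (H₂ i - C₂)‖ := by
          congr 1
          simp only [Pi.add_apply, Pi.smul_apply, smul_sub]
          abel
        _ ≤ a * ‖H₁ i - C₁‖ + b * ‖H₂ i - C₂‖ := by
          grw [norm_add_le, norm_smul, norm_smul, Real.norm_of_nonneg ha, Real.norm_of_nonneg hb]
        _ ≤ a * (matRad H₁ + ε) + b * (matRad H₂ + ε) := by
          gcongr
          · exact (le_ciSup (Finite.bddAbove_range _) i).trans h₁.le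
          · exact (le_ciSup (Finite.bddAbove_range _) i).trans h₂.le
    _ = a * matRad H₁ + b * matRad H₂ + ε := by linear_combination ε * hab

theorem convexOn_matRad_sum_smul {X Y : Type*} [Fintype X] [Fintype Y] [Nonempty X]
    (N : X → Y → ℝ) :
    ConvexOn ℝ univ fun B : Y → Matrix (Fin n) (Fin n) ℂ =>
      matRad fun x => ∑ y, (N x y : ℂ) • B y := by
  let L : (Y → Matrix (Fin n) (Fin n) ℂ) →ₗ[ℝ] X → Matrix (Fin n) (Fin n) ℂ :=
    { toFun := fun B x => ∑ y, (N x y : ℂ) • B y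
      map_add' := fun B B' => by ext1 x; simp [smul_add, Finset.sum_add_distrib]
      map_smul' := fun a B => by ext1 x; simp [Finset.smul_sum, smul_comm (a : ℝ)] }
  exact convexOn_matRad.comp_linearMap L

end Radius

theorem radius_sup_eq_sup_projections_general {X Y : Type*} [Fintype X] [Fintype Y] [Nonempty X]
    (N : X → Y → ℝ) (n : ℕ) :
    sSup { v : ℝ | ∃ B : Y → Matrix (Fin n) (Fin n) ℂ,
        (∀ y, (B y).PosSemidef) ∧
        (∀ y, ((1 : Matrix (Fin n) (Fin n) ℂ) - B y).PosSemidef) ∧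
        v = matRad fun x => ∑ y, (N x y : ℂ) • B y } =
      sSup { v : ℝ | ∃ B : Y → Matrix (Fin n) (Fin n) ℂ,
        (∀ y, (B y).IsHermitian) ∧ (∀ y, B y * B y = B y) ∧
        v = matRad fun x => ∑ y, (N x y : ℂ) • B y } := by
  refine csSup_eq_csSup_of_forall_exists_le ?_ ?_
  · rintro _ ⟨B, hB, hB1, rfl⟩
    have hB_mem : B ∈ convexHull ℝ (univ.pi fun _ : Y => {P | IsStarProjection P}) :=
      mem_convexHull_pi fun y _ => (hB y).mem_convexHull_isStarProjection (hB1 y)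
    obtain ⟨P, hP, hle⟩ :=
      (convexOn_matRad_sum_smul N).exists_ge_of_mem_convexHull (subset_univ _) hB_mem
    exact ⟨_, ⟨P, fun y => (hP y trivial).isSelfAdjoint, fun y => (hP y trivial).isIdempotentElem,
      rfl⟩, hle⟩
  · rintro _ ⟨P, hH, hP, rfl⟩
    have hproj (y : Y) : IsStarProjection (P y) := ⟨hP y, hH y⟩
    exact ⟨_, ⟨P, fun y => nonneg_iff_posSemidef.1 (hproj y).nonneg, fun y => (hproj y).le_one,
      rfl⟩, le_rfl⟩

/-- **Corollary 3.** In the radius formula for `Succ_{Q_n}(N)`, the supremum over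
all families of operators `0 ≤ B_y ≤ I` equals the supremum over families of
orthogonal projections. -/
theorem radius_sup_eq_sup_projections {X Y : Type*} [Fintype X] [Fintype Y] [Nonempty X]
    (N : X → Y → ℝ) (hN : IsChannel N) (n : ℕ) (hn : 2 ≤ n) :
    sSup { v : ℝ | ∃ B : Y → Matrix (Fin n) (Fin n) ℂ,
        (∀ y, (B y).PosSemidef) ∧
        (∀ y, ((1 : Matrix (Fin n) (Fin n) ℂ) - B y).PosSemidef) ∧
        v = matRad fun x => ∑ y, (N x y : ℂ) • B y } =
      sSup { v : ℝ | ∃ B : Y → Matrix (Fin n) (Fin n) ℂ,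
        (∀ y, (B y).IsHermitian) ∧ (∀ y, B y * B y = B y) ∧
        v = matRad fun x => ∑ y, (N x y : ℂ) • B y } :=
  radius_sup_eq_sup_projections_general N n
end
end

section
/- For any classical channel N with finite input alphabet X and finite output alphabet Y, the non-signaling-assisted one-shot success probability satisfies Succ_NS(N) = 1/2 + (1/2)·Rad₁{ n_x : x ∈ X }. -/
open scoped Matrix Kronecker BigOperators Matrix.Norms.L2Operator ComplexOrder
open Matrix Finset

noncomputable section

/-!
For the upper bound fix a centre `c`. Bob's probability of decoding `a` splits into a term in
`n_{f(a,p)} - c` and a term in `c` alone. In the first, Bob's decision weights lie between `0` and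
Alice's marginal, so it is at most the positive part `(‖n_x - c‖₁ + 1 - ∑ c) / 2`; the second
terms add up to `∑ c` over both messages because, by non-signaling, Bob's marginal does not depend
on Alice's input. Hence the success probability is at most `1/2 + max_x ‖n_x - c‖₁ / 2`.

For the lower bound, `Rad₁` is the value of the linear program
`min_c max_{x, σ} ∑_y σ_y (N x y - c y)` over sign patterns `σ ∈ {±1}^Y`. Separating `(0, s)` from
the convex hull of the points `(σ, σ · n_x)` shows that `Rad₁` is at most `∑ w_{x,σ} σ · n_x` for
some probability weights `w` with `∑ w_{x,σ} σ = 0`. Such balanced weights give a non-signaling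
box: the parties share `(x, σ) ∼ w`, Alice sends `x`, and Bob on output `y` answers Alice's bit if
`σ_y = +1` and its negation otherwise. Balance makes Bob's answer a uniform bit whatever Alice's
input, and the success probability is `(1 + ∑ w_{x,σ} σ · n_x) / 2`.
-/

def l1Radius {X Y : Type*} [Fintype Y] (N : X → Y → ℝ) : ℝ :=
  ⨅ c : Y → ℝ, ⨆ x : X, ∑ y, |N x y - c y|

lemma mul_le_half_abs_add {k v : ℝ} (hk₀ : 0 ≤ k) (hk₁ : k ≤ 1) : k * v ≤ (|v| + v) / 2 := by
  rcases abs_cases v with ⟨h, _⟩ | ⟨h, _⟩ <;> rw [h] <;> nlinarith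

section UpperBound

variable {X Y R S P Q : Type*} [Fintype X] [Fintype Y] [Fintype P] [Fintype Q]
  {N : X → Y → ℝ} {D : R → S → P → Q → ℝ}

lemma sum_correlation_mul_sub_le [Nonempty S] (hN : ∀ x, ∑ y, N x y = 1) (hD : IsCorrelation D)
    (hNS : NonSignaling D) (c : Y → ℝ) (r : R) (g : Y → S) (φ : P → X) (k : Y → Q → ℝ)
    (hk₀ : ∀ y q, 0 ≤ k y q) (hk₁ : ∀ y q, k y q ≤ 1) :
    ∑ p, ∑ y, ∑ q, D r (g y) p q * (N (φ p) y - c y) * k y q ≤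
      ((⨆ x, ∑ y, |N x y - c y|) + 1 - ∑ y, c y) / 2 := by
  set s₀ : S := Classical.arbitrary S
  set ρ := ⨆ x, ∑ y, |N x y - c y|
  have hρ (x : X) : ∑ y, |N x y - c y| ≤ ρ :=
    le_ciSup (Set.finite_range fun x => ∑ y, |N x y - c y|).bddAbove x
  have hrow (p : P) : ∑ y, ∑ q, D r (g y) p q * (N (φ p) y - c y) * k y q ≤
      (∑ q, D r s₀ p q) * ((ρ + 1 - ∑ y, c y) / 2) := calc
    _ ≤ ∑ y, ∑ q, D r (g y) p q * ((|N (φ p) y - c y| + (N (φ p) y - c y)) / 2) := by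
      refine Finset.sum_le_sum fun y _ => Finset.sum_le_sum fun q _ => ?_
      rw [mul_assoc, mul_comm _ (k y q)]
      exact mul_le_mul_of_nonneg_left (mul_le_half_abs_add (hk₀ y q) (hk₁ y q)) (hD.1 ..)
    _ = (∑ q, D r s₀ p q) * ((∑ y, |N (φ p) y - c y| + (1 - ∑ y, c y)) / 2) := by
      simp only [← Finset.sum_mul, hNS.1 r p _ s₀, ← Finset.mul_sum, ← Finset.sum_div,
        Finset.sum_add_distrib, Finset.sum_sub_distrib, hN]
    _ ≤ _ := by
      gcongr
      · exact Finset.sum_nonneg fun q _ => hD.1 ..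
      · linarith [hρ (φ p)]
  calc _ ≤ ∑ p, (∑ q, D r s₀ p q) * ((ρ + 1 - ∑ y, c y) / 2) := Finset.sum_le_sum fun p _ => hrow p
    _ = _ := by rw [← Finset.sum_mul, hD.2 r s₀, one_mul]

lemma sum_bool_sum_correlation_mul_indicator (hD : IsCorrelation D) (hNS : NonSignaling D)
    (e : Bool → R) (g : Y → S) (h : Y → Q → Bool) (c : Y → ℝ) :
    ∑ a : Bool, ∑ p, ∑ y, ∑ q, D (e a) (g y) p q * c y * (if h y q = a then 1 else 0) =
      ∑ y, c y := by
  have hswap (a : Bool) : ∑ p, ∑ y, ∑ q, D (e a) (g y) p q * c y * (if h y q = a then 1 else 0) =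
      ∑ y, ∑ q, (∑ p, D (e false) (g y) p q) * c y * (if h y q = a then 1 else 0) := by
    rw [Finset.sum_comm]
    refine Finset.sum_congr rfl fun y _ => ?_
    rw [Finset.sum_comm]
    simp only [← hNS.2 (g y) _ (e a) (e false), Finset.sum_mul]
  simp only [hswap, Fintype.sum_bool, ← Finset.sum_add_distrib]
  refine Finset.sum_congr rfl fun y _ => ?_
  have hmarg : ∑ q, ∑ p, D (e false) (g y) p q = 1 := by rw [Finset.sum_comm, hD.2]
  calc _ = ∑ q, (∑ p, D (e false) (g y) p q) * c y := by
        refine Finset.sum_congr rfl fun q _ => ?_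
        cases h y q <;> simp
    _ = c y := by rw [← Finset.sum_mul, hmarg, one_mul]

end UpperBound

theorem succD_le_half_add_half_iSup {X Y R S P Q : Type*} [Fintype X] [Fintype Y] [Fintype R]
    [Fintype S] [Fintype P] [Fintype Q] [DecidableEq P] [DecidableEq Q] [DecidableEq Y]
    [Nonempty X] [Nonempty R] [Nonempty S] {N : X → Y → ℝ} (hN : ∀ x, ∑ y, N x y = 1)
    {D : R → S → P → Q → ℝ} (hD : IsCorrelation D) (hNS : NonSignaling D) (c : Y → ℝ) :
    SuccD N D ≤ 1 / 2 + 1 / 2 * ⨆ x, ∑ y, |N x y - c y| := by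
  refine ciSup_le fun ⟨e, f, g, h⟩ => ?_
  have hsplit (a : Bool) :
      ∑ p, ∑ y, ∑ q, D (e a) (g y) p q * N (f a p) y * (if h y q = a then 1 else 0) =
        ∑ p, ∑ y, ∑ q, D (e a) (g y) p q * (N (f a p) y - c y) * (if h y q = a then 1 else 0) +
        ∑ p, ∑ y, ∑ q, D (e a) (g y) p q * c y * (if h y q = a then 1 else 0) := by
    simp only [← Finset.sum_add_distrib, ← add_mul, ← mul_add, sub_add_cancel]
  have hexcess (a : Bool) :=
    sum_correlation_mul_sub_le hN hD hNS c (e a) g (f a) (fun y q => if h y q = a then 1 else 0)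
      (fun _ _ => by positivity) (fun _ _ => by split_ifs <;> norm_num)
  have hmean := sum_bool_sum_correlation_mul_indicator hD hNS e g h c
  simp only [Fintype.sum_bool] at hmean ⊢
  linarith [hsplit true, hsplit false, hexcess true, hexcess false]

theorem succD_le_half_add_half_l1Radius {X Y R S P Q : Type*} [Fintype X] [Fintype Y] [Fintype R]
    [Fintype S] [Fintype P] [Fintype Q] [DecidableEq P] [DecidableEq Q] [DecidableEq Y]
    [Nonempty X] [Nonempty R] [Nonempty S] {N : X → Y → ℝ} (hN : ∀ x, ∑ y, N x y = 1)
    {D : R → S → P → Q → ℝ} (hD : IsCorrelation D) (hNS : NonSignaling D) :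
    SuccD N D ≤ 1 / 2 + 1 / 2 * l1Radius N := by
  have h (c : Y → ℝ) := succD_le_half_add_half_iSup hN hD hNS c
  have : 2 * SuccD N D - 1 ≤ l1Radius N := le_ciInf fun c => by linarith [h c]
  linarith

section Reindex

variable {R S P Q R' S' P' Q' : Type*} [Fintype P] [Fintype Q] [Fintype P'] [Fintype Q']
  {D : R → S → P → Q → ℝ}

lemma IsCorrelation.comp (hD : IsCorrelation D) (eR : R' → R) (eS : S' → S)
    (eP : P' ≃ P) (eQ : Q' ≃ Q) :
    IsCorrelation fun r s p q => D (eR r) (eS s) (eP p) (eQ q) := by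
  refine ⟨fun _ _ _ _ => hD.1 .., fun r s => ?_⟩
  rw [Equiv.sum_comp eP fun p => ∑ q, D (eR r) (eS s) p (eQ q)]
  simp only [Equiv.sum_comp eQ (D (eR r) (eS s) _), hD.2]

lemma NonSignaling.comp (hNS : NonSignaling D) (eR : R' → R) (eS : S' → S)
    (eP : P' ≃ P) (eQ : Q' ≃ Q) :
    NonSignaling fun r s p q => D (eR r) (eS s) (eP p) (eQ q) := by
  refine ⟨fun r p s s' => ?_, fun s q r r' => ?_⟩
  · simp only [Equiv.sum_comp eQ (D _ _ _), hNS.1 _ _ (eS s) (eS s')]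
  · rw [Equiv.sum_comp eP fun p => D (eR r) (eS s) p (eQ q),
      Equiv.sum_comp eP fun p => D (eR r') (eS s) p (eQ q), hNS.2 _ _ (eR r) (eR r')]

lemma succD_le_succD_comp {X Y : Type*} [Fintype X] [Fintype Y] [DecidableEq Y]
    [Fintype R] [Fintype S] [Fintype R'] [Fintype S'] [DecidableEq P] [DecidableEq Q]
    [DecidableEq P'] [DecidableEq Q'] [Nonempty X] [Nonempty R] [Nonempty S] [Nonempty R']
    [Nonempty S'] (N : X → Y → ℝ) (eR : R' ≃ R) (eS : S' ≃ S) (eP : P' ≃ P) (eQ : Q' ≃ Q) :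
    SuccD N D ≤ SuccD N fun r s p q => D (eR r) (eS s) (eP p) (eQ q) := by
  refine ciSup_le fun ⟨e, f, g, h⟩ => ?_
  refine le_of_eq_of_le ?_ (le_ciSup (Set.finite_range _).bddAbove
    (eR.symm ∘ e, fun a p => f a (eP p), eS.symm ∘ g, fun y q => h y (eQ q)))
  simp only [Function.comp_apply, Equiv.apply_symm_apply]
  congr 1
  refine Finset.sum_congr rfl fun a _ => ?_
  rw [← Equiv.sum_comp eP]
  refine Finset.sum_congr rfl fun p _ => Finset.sum_congr rfl fun y _ => ?_
  exact (Equiv.sum_comp eQ fun q => D (e a) (g y) (eP p) q * N (f a (eP p)) y *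
    (if h y q = a then 1 else 0)).symm

end Reindex

lemma exists_fin_correlation_le_succD {X Y R S P Q : Type*} [Fintype X] [Fintype Y]
    [DecidableEq Y] [Fintype R] [Fintype S] [Fintype P] [Fintype Q] [DecidableEq P]
    [DecidableEq Q] [Nonempty X] [Nonempty R] [Nonempty S] (N : X → Y → ℝ)
    {D : R → S → P → Q → ℝ} (hD : IsCorrelation D) (hNS : NonSignaling D) :
    ∃ (nR nS nP nQ : ℕ) (D' : Fin (nR + 1) → Fin (nS + 1) → Fin nP → Fin nQ → ℝ),
      IsCorrelation D' ∧ NonSignaling D' ∧ SuccD N D ≤ SuccD N D' := by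
  let eR : Fin (Fintype.card R - 1 + 1) ≃ R :=
    (Fintype.equivFinOfCardEq (Nat.sub_add_cancel Fintype.card_pos).symm).symm
  let eS : Fin (Fintype.card S - 1 + 1) ≃ S :=
    (Fintype.equivFinOfCardEq (Nat.sub_add_cancel Fintype.card_pos).symm).symm
  let eP := (Fintype.equivFin P).symm
  let eQ := (Fintype.equivFin Q).symm
  exact ⟨_, _, _, _, _, hD.comp eR eS eP eQ, hNS.comp eR eS eP eQ,
    succD_le_succD_comp N eR eS eP eQ⟩

section LowerBound

variable {X Y : Type*}

def signPattern (σ : Y → Bool) (y : Y) : ℝ := if σ y then 1 else -1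

lemma signPattern_decide_nonneg_mul (v : Y → ℝ) (y : Y) :
    signPattern (fun y => decide (0 ≤ v y)) y * v y = |v y| := by
  by_cases h : 0 ≤ v y
  · simp [signPattern, h, abs_of_nonneg h]
  · simp [signPattern, h, abs_of_neg (not_le.mp h)]

variable [Fintype Y]

def dualPoint (N : X → Y → ℝ) (i : X × (Y → Bool)) : (Y → ℝ) × ℝ :=
  (signPattern i.2, ∑ y, signPattern i.2 y * N i.1 y)

lemma l1Radius_le [Nonempty X] {N : X → Y → ℝ} {c : Y → ℝ} {s : ℝ}
    (h : ∀ x, ∑ y, |N x y - c y| ≤ s) : l1Radius N ≤ s :=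
  (ciInf_le ⟨0, by rintro _ ⟨c, rfl⟩; exact Real.iSup_nonneg fun x => by positivity⟩ c).trans
    (ciSup_le h)

lemma strongDual_prod_apply [DecidableEq Y] (f : StrongDual ℝ ((Y → ℝ) × ℝ)) (v : Y → ℝ) (τ : ℝ) :
    f (v, τ) = ∑ y, v y * f ((fun j => if y = j then 1 else 0), 0) + τ * f (0, 1) := by
  have hsplit : f (v, τ) = f (v, 0) + τ * f (0, 1) := by
    rw [← smul_eq_mul, ← map_smul, ← map_add]
    simp
  have hinl : f (v, 0) = ((f : (Y → ℝ) × ℝ →ₗ[ℝ] ℝ).comp (LinearMap.inl ℝ _ ℝ)) v := rfl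
  rw [hsplit, hinl, LinearMap.pi_apply_eq_sum_univ]
  simp [smul_eq_mul]

lemma l1Radius_le_of_notMem [Nonempty X] {N : X → Y → ℝ} {K : Set ((Y → ℝ) × ℝ)}
    (hK : Convex ℝ K) (hKc : IsClosed K) (hNK : ∀ i, dualPoint N i ∈ K) {t s : ℝ}
    (ht : ((0 : Y → ℝ), t) ∈ K) (hts : t < s) (hs : ((0 : Y → ℝ), s) ∉ K) :
    l1Radius N ≤ s := by
  classical
  obtain ⟨f, u, hfK, hfs⟩ := geometric_hahn_banach_closed_point hK hKc hs
  set γ := f (0, 1)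
  set a : Y → ℝ := fun y => f ((fun j => if y = j then 1 else 0), 0)
  have hf (v : Y → ℝ) (τ : ℝ) : f (v, τ) = ∑ y, v y * a y + τ * γ := strongDual_prod_apply f v τ
  have hγ : 0 < γ := by
    have := (hfK _ ht).trans hfs
    simp only [hf, Pi.zero_apply, zero_mul, Finset.sum_const_zero, zero_add] at this
    nlinarith
  -- Dividing the separating functional by its `(0, 1)`-coefficient yields the centre.
  refine l1Radius_le (c := fun y => -a y / γ) fun x => ?_
  set σ : Y → Bool := fun y => decide (0 ≤ N x y - -a y / γ)
  have hval : (∑ y, |N x y - -a y / γ|) * γ = f (dualPoint N (x, σ)) := by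
    simp only [← signPattern_decide_nonneg_mul fun y => N x y - -a y / γ, dualPoint, hf,
      Finset.sum_mul]
    rw [← Finset.sum_add_distrib]
    refine Finset.sum_congr rfl fun y _ => ?_
    have : (N x y - -a y / γ) * γ = N x y * γ + a y := by field_simp; ring
    rw [mul_assoc, this]
    ring
  have hlt : (∑ y, |N x y - -a y / γ|) * γ < s * γ := by
    rw [hval]
    have := hfK _ (hNK (x, σ))
    have hs' : f (0, s) = s * γ := by simp [hf]
    linarith
  exact (lt_of_mul_lt_mul_right hlt hγ.le).le

end LowerBound

lemma exists_balanced_weights_l1Radius_le {X Y : Type*} [Fintype X] [Fintype Y] [DecidableEq Y]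
    [Nonempty X] (N : X → Y → ℝ) :
    ∃ w ∈ stdSimplex ℝ (X × (Y → Bool)), (∀ y, ∑ i, w i * signPattern i.2 y = 0) ∧
      l1Radius N ≤ ∑ i, w i * ∑ y, signPattern i.2 y * N i.1 y := by
  classical
  set L := Fintype.linearCombination ℝ (dualPoint N)
  have hL (w : X × (Y → Bool) → ℝ) : L w =
      (fun y => ∑ i, w i * signPattern i.2 y, ∑ i, w i * ∑ y, signPattern i.2 y * N i.1 y) := by
    ext <;> simp [L, Fintype.linearCombination_apply, dualPoint, Prod.fst_sum, Prod.snd_sum]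
  have hLc : Continuous L := L.continuous_of_finiteDimensional
  set W := stdSimplex ℝ (X × (Y → Bool)) ∩ {w | (L w).1 = 0}
  have hW : IsCompact W := (isCompact_stdSimplex ℝ _).inter_right
    (isClosed_eq (continuous_fst.comp hLc) continuous_const)
  obtain ⟨x₀⟩ := ‹Nonempty X›
  have hW₀ : W.Nonempty := by
    refine ⟨(1 / 2 : ℝ) • Pi.single (x₀, fun _ => true) 1 +
      (1 / 2 : ℝ) • Pi.single (x₀, fun _ => false) 1, convex_stdSimplex ℝ _
        (single_mem_stdSimplex ℝ _) (single_mem_stdSimplex ℝ _) (by norm_num) (by norm_num)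
        (by norm_num), ?_⟩
    funext y
    simp [L, Fintype.linearCombination_apply_single, dualPoint, signPattern]
  obtain ⟨w, hwW, hmax⟩ := hW.exists_isMaxOn hW₀ (continuous_snd.comp hLc).continuousOn
  refine ⟨w, hwW.1, fun y => by simpa [hL] using congrFun hwW.2 y, ?_⟩
  have hval : (L w).2 = ∑ i, w i * ∑ y, signPattern i.2 y * N i.1 y := by rw [hL]
  rw [← hval]
  refine le_of_forall_gt_imp_ge_of_dense fun s hs => ?_
  refine l1Radius_le_of_notMem (K := L '' stdSimplex ℝ _) ((convex_stdSimplex ℝ _).linear_image L)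
    ((isCompact_stdSimplex ℝ _).image hLc).isClosed
    (fun i => ⟨Pi.single i 1, single_mem_stdSimplex ℝ i, by simp [L]⟩)
    ⟨w, hwW.1, Prod.ext hwW.2 rfl⟩ hs ?_
  rintro ⟨w', hw', hLw'⟩
  have : (L w').2 ≤ (L w).2 := isMaxOn_iff.mp hmax w' ⟨hw', congrArg Prod.fst hLw'⟩
  rw [hLw'] at this
  linarith

section DualCorrelation

variable {X Y : Type*}

def dualCorrelation (w : X × (Y → Bool) → ℝ) (a : Bool) (y : Y) (i : X × (Y → Bool))
    (b : Bool) : ℝ :=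
  if b = (a == i.2 y) then w i else 0

lemma sum_dualCorrelation_right (w : X × (Y → Bool) → ℝ) (a : Bool) (y : Y)
    (i : X × (Y → Bool)) : ∑ b, dualCorrelation w a y i b = w i := by
  simp only [dualCorrelation, Finset.sum_ite_eq', Finset.mem_univ, if_true]

variable [Fintype X] [Fintype Y] [DecidableEq Y] {w : X × (Y → Bool) → ℝ}

lemma isCorrelation_dualCorrelation (hw : w ∈ stdSimplex ℝ (X × (Y → Bool))) :
    IsCorrelation (dualCorrelation w) := by
  refine ⟨fun a y i b => ?_, fun a y => ?_⟩
  · unfold dualCorrelation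
    split_ifs
    exacts [hw.1 i, le_rfl]
  · simpa only [sum_dualCorrelation_right] using hw.2

lemma sum_ite_eq_half (hw : ∑ i, w i = 1) (hbal : ∀ y, ∑ i, w i * signPattern i.2 y = 0)
    (y : Y) (β : Bool) : ∑ i, (if i.2 y = β then w i else 0) = 1 / 2 := by
  have hsum : ∑ i, (if i.2 y = true then w i else 0) + ∑ i, (if i.2 y = false then w i else 0)
      = 1 := by
    rw [← Finset.sum_add_distrib]
    refine (Finset.sum_congr rfl fun i _ => ?_).trans hw
    cases i.2 y <;> simp
  have hdiff : ∑ i, (if i.2 y = true then w i else 0) - ∑ i, (if i.2 y = false then w i else 0)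
      = 0 := by
    rw [← Finset.sum_sub_distrib]
    refine (Finset.sum_congr rfl fun i _ => ?_).trans (hbal y)
    cases h : i.2 y <;> simp [signPattern, h]
  cases β <;> linarith

lemma nonSignaling_dualCorrelation (hw : ∑ i, w i = 1)
    (hbal : ∀ y, ∑ i, w i * signPattern i.2 y = 0) :
    NonSignaling (dualCorrelation w) := by
  refine ⟨fun a i y y' => by simp only [sum_dualCorrelation_right], fun y b a a' => ?_⟩
  have hmarg (a : Bool) : ∑ i, dualCorrelation w a y i b = 1 / 2 := by
    rw [← sum_ite_eq_half hw hbal y (a == b)]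
    exact Finset.sum_congr rfl fun i _ => by
      cases a <;> cases b <;> cases h : i.2 y <;> simp [dualCorrelation, h]
  rw [hmarg, hmarg]

lemma le_succD_dualCorrelation [DecidableEq X] [Nonempty X] [Nonempty Y] {N : X → Y → ℝ}
    (hN : ∀ x, ∑ y, N x y = 1) (hw : ∑ i, w i = 1) :
    (1 + ∑ i, w i * ∑ y, signPattern i.2 y * N i.1 y) / 2 ≤ SuccD N (dualCorrelation w) := by
  refine le_of_eq_of_le ?_ (le_ciSup (Set.finite_range _).bddAbove
    ((id, fun _ i => i.1, id, fun _ b => b) :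
      (Bool → Bool) × (Bool → X × (Y → Bool) → X) × (Y → Y) × (Y → Bool → Bool)))
  have hdecode (a : Bool) (i : X × (Y → Bool)) (y : Y) :
      ∑ b, dualCorrelation w a y i b * N i.1 y * (if b = a then 1 else 0) =
        w i * ((1 + signPattern i.2 y) / 2 * N i.1 y) := by
    cases a <;> cases h : i.2 y <;> simp [dualCorrelation, signPattern, h]
  have hrow (i : X × (Y → Bool)) :
      ∑ y, (1 + signPattern i.2 y) / 2 * N i.1 y = (1 + ∑ y, signPattern i.2 y * N i.1 y) / 2 := by
    conv_rhs => rw [← hN i.1, ← Finset.sum_add_distrib, Finset.sum_div]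
    exact Finset.sum_congr rfl fun y _ => by ring
  have htotal : ∑ i, w i * ((1 + ∑ y, signPattern i.2 y * N i.1 y) / 2) =
      (∑ i, w i + ∑ i, w i * ∑ y, signPattern i.2 y * N i.1 y) / 2 := by
    rw [← Finset.sum_add_distrib, Finset.sum_div]
    exact Finset.sum_congr rfl fun i _ => by ring
  simp only [id, hdecode, ← Finset.mul_sum, hrow, Fintype.sum_bool, htotal, hw]
  ring

end DualCorrelation

/-- **Proposition 4.** The non-signaling assisted one-shot success probability
equals `1/2 + (1/2) · Rad₁ { n_x : x ∈ X }`, where `Rad₁` is the radius in the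
`ℓ¹` norm of the set of output distributions of `N`. -/
theorem succNS_eq_radius {X Y : Type*} [Fintype X] [Fintype Y] [DecidableEq Y]
    [Nonempty X] [Nonempty Y]
    (N : X → Y → ℝ) (hN : IsChannel N) :
    SuccNS N = 1 / 2 + (1 / 2) * ⨅ c : Y → ℝ, ⨆ x : X, ∑ y, |N x y - c y| := by
  classical
  change sSup _ = 1 / 2 + 1 / 2 * l1Radius N
  obtain ⟨w, hw, hbal, hrad⟩ := exists_balanced_weights_l1Radius_le N
  have hD := isCorrelation_dualCorrelation hw
  have hNS := nonSignaling_dualCorrelation hw.2 hbal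
  obtain ⟨_, _, _, _, D, hD', hNS', hle⟩ := exists_fin_correlation_le_succD N hD hNS
  have hopt : SuccD N D = 1 / 2 + 1 / 2 * l1Radius N :=
    le_antisymm (succD_le_half_add_half_l1Radius hN.2 hD' hNS')
      (by linarith [le_succD_dualCorrelation (N := N) hN.2 hw.2])
  refine IsGreatest.csSup_eq ⟨⟨_, _, _, _, D, hD', hNS', hopt.symm⟩, ?_⟩
  rintro _ ⟨_, _, _, _, D, hD, hNS, rfl⟩
  exact succD_le_half_add_half_l1Radius hN.2 hD hNS

end
end

section
/- Let N be a classical channel with finite input alphabet X of size r and finite output alphabet Y. Then Succ_NS(N) − 1/2 ≤ (2 − 2/r)·(Succ(N) − 1/2). -/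
open scoped Matrix Kronecker BigOperators Matrix.Norms.L2Operator ComplexOrder
open Matrix Finset

noncomputable section

/-!
Fix a protocol. For each bit `a`, non-signaling makes the distribution `ρ a` of Alice's channel
input independent of Bob's box input, and the weight `d a y x` of "Alice sends `x` and Bob,
seeing `y`, outputs `a`" satisfies `0 ≤ d a y x ≤ ρ a x` and `∑ a, ∑ x, d a y x = 1` for every `y`
(Bob's marginal does not depend on Alice's input). Pick `x₀` with `ρ false x₀ + ρ true x₀ ≥ 2 / r`.
Measuring every row `N x` against `N x₀` bounds twice the success probability by
`1 + ∑ a, ∑ x, ρ a x · TV(N x, N x₀)`; each distance is at most `2 Succ N - 1` and the one at `x₀`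
vanishes, which leaves `1 + (2 - 2 / r) (2 Succ N - 1)`.
-/

lemma sum_mul_le_of_apply_eq_zero {ι : Type*} [Fintype ι] {ρ T : ι → ℝ} {δ : ℝ}
    (hρ₀ : ∀ i, 0 ≤ ρ i) (hρ : ∑ i, ρ i = 1) (hT : ∀ i, T i ≤ δ) {i₀ : ι} (hT₀ : T i₀ = 0) :
    ∑ i, ρ i * T i ≤ (1 - ρ i₀) * δ := by
  classical
  rw [← add_sum_erase _ _ (mem_univ i₀), hT₀, mul_zero, zero_add, ← hρ,
    ← sum_erase_eq_sub (mem_univ i₀), sum_mul]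
  exact sum_le_sum fun i _ => mul_le_mul_of_nonneg_left (hT i) (hρ₀ i)

lemma sum_sum_mul_le_add {A X : Type*} [Fintype A] [Fintype X] {ρ d : A → X → ℝ} {n : X → ℝ}
    (c : ℝ) (hd₀ : ∀ a x, 0 ≤ d a x) (hdρ : ∀ a x, d a x ≤ ρ a x) (hd : ∑ a, ∑ x, d a x = 1) :
    ∑ a, ∑ x, d a x * n x ≤ c + ∑ a, ∑ x, ρ a x * max (n x - c) 0 := by
  calc ∑ a, ∑ x, d a x * n x = c + ∑ a, ∑ x, d a x * (n x - c) := by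
        simp only [mul_sub, sum_sub_distrib, ← sum_mul, hd]; ring
    _ ≤ c + ∑ a, ∑ x, ρ a x * max (n x - c) 0 := by
        refine add_le_add_right (sum_le_sum fun a _ => sum_le_sum fun x _ => ?_) c
        exact (mul_le_mul_of_nonneg_left (le_max_left _ _) (hd₀ a x)).trans
          (mul_le_mul_of_nonneg_right (hdρ a x) (le_max_right _ _))

lemma exists_card_div_le_sum {A X : Type*} [Fintype A] [Fintype X] [Nonempty X]
    {ρ : A → X → ℝ} (hρ : ∀ a, ∑ x, ρ a x = 1) :
    ∃ x, (Fintype.card A : ℝ) / Fintype.card X ≤ ∑ a, ρ a x := by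
  have hX : (Fintype.card X : ℝ) ≠ 0 := by positivity
  obtain ⟨x, -, hx⟩ := exists_le_of_sum_le (univ_nonempty (α := X))
    (f := fun _ => (Fintype.card A : ℝ) / Fintype.card X) (g := fun x => ∑ a, ρ a x)
    (by simp [sum_comm (γ := X), hρ, mul_div_cancel₀ _ hX])
  exact ⟨x, hx⟩

section Protocol

variable {R S P Q X Y : Type*} [Fintype P] [Fintype Q] [DecidableEq X]
  {D : R → S → P → Q → ℝ} (e : Bool → R) (f : Bool → P → X) (g : Y → S) (h : Y → Q → Bool)

variable (D) in
/-- Independent of Bob's box input `s` when `D` is non-signaling. -/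
def sendProb (s : S) (a : Bool) (x : X) : ℝ :=
  ∑ p with f a p = x, ∑ q, D (e a) s p q

variable (D) in
def decodeProb (a : Bool) (y : Y) (x : X) : ℝ :=
  ∑ p with f a p = x, ∑ q with h y q = a, D (e a) (g y) p q

lemma sendProb_nonneg (hD : IsCorrelation D) (s : S) (a : Bool) (x : X) :
    0 ≤ sendProb D e f s a x :=
  sum_nonneg fun _ _ => sum_nonneg fun _ _ => hD.1 _ _ _ _

lemma decodeProb_nonneg (hD : IsCorrelation D) (a : Bool) (y : Y) (x : X) :
    0 ≤ decodeProb D e f g h a y x :=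
  sum_nonneg fun _ _ => sum_nonneg fun _ _ => hD.1 _ _ _ _

lemma sum_sendProb [Fintype X] (hD : IsCorrelation D) (s : S) (a : Bool) :
    ∑ x, sendProb D e f s a x = 1 := by
  simp only [sendProb, sum_fiberwise, hD.2]

lemma decodeProb_le_sendProb (hD : IsCorrelation D) (hNS : NonSignaling D) (s : S) (a : Bool)
    (y : Y) (x : X) : decodeProb D e f g h a y x ≤ sendProb D e f s a x := by
  refine sum_le_sum fun p _ => ?_
  rw [← hNS.1 (e a) p (g y) s]
  exact sum_le_sum_of_subset_of_nonneg (filter_subset _ _) fun _ _ _ => hD.1 _ _ _ _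

lemma sum_sum_decodeProb [Fintype X] (hD : IsCorrelation D) (hNS : NonSignaling D) (y : Y) :
    ∑ a, ∑ x, decodeProb D e f g h a y x = 1 := by
  calc ∑ a, ∑ x, decodeProb D e f g h a y x
      = ∑ a, ∑ q with h y q = a, ∑ p, D (e a) (g y) p q := by
        simp only [decodeProb, sum_fiberwise]
        exact sum_congr rfl fun a _ => sum_comm
    _ = ∑ a, ∑ q with h y q = a, ∑ p, D (e false) (g y) p q := by
        simp only [hNS.2 (g y) _ (e _) (e false)]
    _ = 1 := by rw [sum_fiberwise, sum_comm, hD.2]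

lemma sum_protocol_eq_sum_decodeProb_mul [Fintype X] [Fintype Y] (N : X → Y → ℝ) (a : Bool) :
    ∑ p, ∑ y, ∑ q, D (e a) (g y) p q * N (f a p) y * (if h y q = a then 1 else 0) =
      ∑ y, ∑ x, decodeProb D e f g h a y x * N x y := by
  have hfiber (y : Y) (x : X) : decodeProb D e f g h a y x * N x y =
      ∑ p with f a p = x, (∑ q with h y q = a, D (e a) (g y) p q) * N (f a p) y := by
    rw [decodeProb, sum_mul]
    exact sum_congr rfl fun p hp => by rw [(mem_filter.1 hp).2]
  simp only [hfiber, sum_fiberwise]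
  rw [sum_comm]
  simp only [sum_filter, sum_mul, mul_ite, mul_one, mul_zero, ite_mul, zero_mul]

end Protocol

namespace IsChannel

variable {X Y : Type*} [Fintype X] [Fintype Y] [Nonempty X] {N : X → Y → ℝ}

lemma le_succ (hN : IsChannel N) (x₀ x₁ : X) (g : Y → Bool) :
    (1 / 2) * (∑ y, if g y = false then N x₀ y else 0) +
      (1 / 2) * (∑ y, if g y = true then N x₁ y else 0) ≤ Succ N := by
  refine le_ciSup (f := fun z : X × X × (Y → Bool) => (1 / 2) * (∑ y, if z.2.2 y = false then
    N z.1 y else 0) + (1 / 2) * (∑ y, if z.2.2 y = true then N z.2.1 y else 0)) ⟨1, ?_⟩ (x₀, x₁, g)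
  rintro v ⟨⟨x₀, x₁, g⟩, rfl⟩
  have h_ite_le (b : Bool) (x : X) : (∑ y, if g y = b then N x y else 0) ≤ 1 :=
    (hN.2 x).symm ▸ sum_le_sum fun y _ => by split_ifs <;> simp [hN.1]
  linarith [h_ite_le false x₀, h_ite_le true x₁]

lemma half_le_succ (hN : IsChannel N) : 1 / 2 ≤ Succ N := by
  obtain ⟨x⟩ := ‹Nonempty X›
  simpa [hN.2 x] using hN.le_succ x x fun _ => false

/-- Witnessed by decoding `true` exactly where `N x` exceeds `N x'`. -/
lemma sum_max_sub_le (hN : IsChannel N) (x x' : X) :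
    ∑ y, max (N x y - N x' y) 0 ≤ 2 * Succ N - 1 := by
  have hpoint (y : Y) : (if decide (N x' y < N x y) = false then N x' y else 0) +
      (if decide (N x' y < N x y) = true then N x y else 0) = N x' y + max (N x y - N x' y) 0 := by
    by_cases h : N x' y < N x y
    · simp [h, max_eq_left (sub_nonneg.2 h.le)]
    · simp [h, max_eq_right (sub_nonpos.2 (not_lt.1 h))]
  have hsum := sum_congr rfl fun y (_ : y ∈ univ) => hpoint y
  simp only [sum_add_distrib, hN.2 x'] at hsum
  linarith [hN.le_succ x' x fun y => decide (N x' y < N x y)]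

theorem sum_sum_sum_mul_le (hN : IsChannel N) {A : Type*} [Fintype A]
    {ρ : A → X → ℝ} {d : A → Y → X → ℝ} (hρ₀ : ∀ a x, 0 ≤ ρ a x) (hρ : ∀ a, ∑ x, ρ a x = 1)
    (hd₀ : ∀ a y x, 0 ≤ d a y x) (hdρ : ∀ a y x, d a y x ≤ ρ a x)
    (hd : ∀ y, ∑ a, ∑ x, d a y x = 1) :
    ∑ a, ∑ y, ∑ x, d a y x * N x y ≤
      1 + (Fintype.card A - Fintype.card A / Fintype.card X) * (2 * Succ N - 1) := by
  obtain ⟨x₀, hx₀⟩ := exists_card_div_le_sum hρ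
  have hδ : 0 ≤ 2 * Succ N - 1 := by linarith [hN.half_le_succ]
  calc ∑ a, ∑ y, ∑ x, d a y x * N x y = ∑ y, ∑ a, ∑ x, d a y x * N x y := sum_comm
    _ ≤ ∑ y, (N x₀ y + ∑ a, ∑ x, ρ a x * max (N x y - N x₀ y) 0) :=
        sum_le_sum fun y _ => sum_sum_mul_le_add _ (hd₀ · y) (hdρ · y) (hd y)
    _ = 1 + ∑ a, ∑ x, ρ a x * ∑ y, max (N x y - N x₀ y) 0 := by
        simp only [sum_add_distrib, hN.2 x₀, mul_sum]
        rw [sum_comm]; simp only [sum_comm (γ := Y)]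
    _ ≤ 1 + ∑ a, (1 - ρ a x₀) * (2 * Succ N - 1) := by
        gcongr with a
        exact sum_mul_le_of_apply_eq_zero (hρ₀ a) (hρ a) (hN.sum_max_sub_le · x₀) (by simp)
    _ ≤ 1 + (Fintype.card A - Fintype.card A / Fintype.card X) * (2 * Succ N - 1) := by
        rw [← sum_mul, sum_sub_distrib, sum_const, card_univ, nsmul_one]
        gcongr

theorem succD_le (hN : IsChannel N) {R S P Q : Type*} [Fintype R] [Fintype S] [Fintype P]
    [Fintype Q] [DecidableEq P] [DecidableEq Q] [DecidableEq Y] [Nonempty R] [Nonempty S]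
    {D : R → S → P → Q → ℝ} (hD : IsCorrelation D) (hNS : NonSignaling D) :
    SuccD N D ≤ 1 / 2 + (2 - 2 / Fintype.card X) * (Succ N - 1 / 2) := by
  classical
  obtain ⟨s⟩ := ‹Nonempty S›
  refine ciSup_le fun ⟨e, f, g, h⟩ => ?_
  have hbound := hN.sum_sum_sum_mul_le (sendProb_nonneg e f hD s)
    (sum_sendProb e f hD s) (decodeProb_nonneg e f g h hD)
    (decodeProb_le_sendProb e f g h hD hNS s) (sum_sum_decodeProb e f g h hD hNS)
  rw [Fintype.card_bool, Nat.cast_ofNat] at hbound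
  dsimp only
  simp only [sum_protocol_eq_sum_decodeProb_mul]
  linarith

end IsChannel

/-- **Theorem 5.** For a channel `N` with input alphabet of size `r`,
`Succ_NS(N) − 1/2 ≤ (2 − 2/r) (Succ(N) − 1/2)`. -/
theorem succNS_le_bound {X Y : Type*} [Fintype X] [Fintype Y] [DecidableEq Y]
    [Nonempty X]
    (N : X → Y → ℝ) (hN : IsChannel N) :
    SuccNS N - 1 / 2 ≤
      (2 - 2 / (Fintype.card X : ℝ)) * (Succ N - 1 / 2) := by
  have hcard : (1 : ℝ) ≤ Fintype.card X := Nat.one_le_cast.2 Fintype.card_pos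
  have hbound_nonneg : 0 ≤ 1 / 2 + (2 - 2 / (Fintype.card X : ℝ)) * (Succ N - 1 / 2) := by
    have : 2 / (Fintype.card X : ℝ) ≤ 2 := div_le_self zero_le_two hcard
    nlinarith [hN.half_le_succ]
  have hsup : SuccNS N ≤ 1 / 2 + (2 - 2 / (Fintype.card X : ℝ)) * (Succ N - 1 / 2) := by
    refine Real.sSup_le ?_ hbound_nonneg
    rintro v ⟨nR, nS, nP, nQ, D, hD, hDNS, rfl⟩
    exact hN.succD_le hD hDNS
  linarith
end
end

section
/- Let N be a classical channel with finite input alphabet X and finite output alphabet Y, and let D be a non-signaling correlation with input alphabets R, S and output alphabets P, Q, where m := |P| is the size of the output alphabet of Alice's part of the device. Then Succ(N, D) − 1/2 ≤ (2 − 1/m)·(Succ(N) − 1/2). -/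
open scoped Matrix Kronecker BigOperators Matrix.Norms.L2Operator ComplexOrder
open Matrix Finset

noncomputable section

/-!
Write `w (a, p) y` (`protocolWeight`) for the probability that Alice's part outputs `p` and
Bob decodes `a` when the message is `a` and Bob receives `y`. A protocol succeeds with probability
`½ ∑_{a,p} ∑_y w (a, p) y · N (f a p) y`. Non-signaling from Alice to Bob gives
`∑_{a,p} w (a, p) y = 1` for every `y`, and from Bob to Alice `w (a, p) y ≤ α (a, p)`,
Alice's marginal, which is a distribution in `p` for each `a`. Compare every `N (f a p)` with
`N (f false p₀)`, where `p₀` is a most likely output of Alice's part for `a = false`: the term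
`(false, p₀)` contributes `1`, every other term at most `α (a, p)` times the total variation
distance between two rows of `N`, which is at most `2 Succ N - 1`; and these `α (a, p)` sum to
`2 - α (false, p₀) ≤ 2 - 1 / |P|`.
-/

section Succ

variable {X Y : Type*} [Fintype X] [Fintype Y] [Nonempty X]

theorem le_succ (N : X → Y → ℝ) (x₀ x₁ : X) (g : Y → Bool) :
    (1 / 2) * (∑ y, if g y = false then N x₀ y else 0) +
      (1 / 2) * (∑ y, if g y = true then N x₁ y else 0) ≤ Succ N :=
  le_ciSup (f := fun z : X × X × (Y → Bool) =>
    (1 / 2) * (∑ y, if z.2.2 y = false then N z.1 y else 0) +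
      (1 / 2) * (∑ y, if z.2.2 y = true then N z.2.1 y else 0))
    (Set.finite_range _).bddAbove (x₀, x₁, g)

/-- Decoding `y` as the input under which it is likelier wins with probability
`(1 + ∑ y, max (N x y - N x' y) 0) / 2`. -/
theorem sum_max_sub_le_succ {N : X → Y → ℝ} (hN : ∀ x, ∑ y, N x y = 1) (x x' : X) :
    ∑ y, max (N x y - N x' y) 0 ≤ 2 * (Succ N - 1 / 2) := by
  have hdecode : ∀ y, ((if decide (N x y < N x' y) = false then N x y else 0) +
      if decide (N x y < N x' y) = true then N x' y else 0) =
      N x' y + max (N x y - N x' y) 0 := by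
    intro y
    by_cases h : N x y < N x' y
    · simp [h, max_eq_right (sub_nonpos.mpr h.le)]
    · simp [h, max_eq_left (sub_nonneg.mpr (not_lt.mp h))]
  have hle := le_succ N x x' fun y => decide (N x y < N x' y)
  rw [← mul_add, ← sum_add_distrib, sum_congr rfl fun y _ => hdecode y, sum_add_distrib,
    hN] at hle
  linarith

theorem one_half_le_succ {N : X → Y → ℝ} (hN : ∀ x, ∑ y, N x y = 1) : 1 / 2 ≤ Succ N := by
  obtain ⟨x⟩ := ‹Nonempty X›
  have := sum_max_sub_le_succ hN x x
  simp only [sub_self, max_self, sum_const_zero] at this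
  linarith

end Succ

theorem sum_mul_le_mul_sum_max {Y : Type*} [Fintype Y] {c d : Y → ℝ} {α : ℝ}
    (hc : ∀ y, 0 ≤ c y) (hcα : ∀ y, c y ≤ α) :
    ∑ y, c y * d y ≤ α * ∑ y, max (d y) 0 := by
  rw [mul_sum]
  refine sum_le_sum fun y _ => ?_
  calc c y * d y ≤ c y * max (d y) 0 := mul_le_mul_of_nonneg_left (le_max_left _ _) (hc y)
    _ ≤ α * max (d y) 0 := mul_le_mul_of_nonneg_right (hcα y) (le_max_right _ _)

theorem sum_sum_mul_le_one_add {ι Y : Type*} [Fintype ι] [DecidableEq ι] [Fintype Y]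
    {w μ : ι → Y → ℝ} {α : ι → ℝ} {t : ℝ} (i₀ : ι)
    (hw : ∀ i y, 0 ≤ w i y) (hwα : ∀ i y, w i y ≤ α i) (hα : ∀ i, 0 ≤ α i)
    (hw_sum : ∀ y, ∑ i, w i y = 1) (hμ : ∑ y, μ i₀ y = 1)
    (ht : ∀ i, ∑ y, max (μ i y - μ i₀ y) 0 ≤ t) :
    ∑ i, ∑ y, w i y * μ i y ≤ 1 + (∑ i ∈ univ.erase i₀, α i) * t := by
  have hbase : ∑ i, ∑ y, w i y * μ i₀ y = 1 := by
    rw [sum_comm]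
    simp_rw [← sum_mul, hw_sum, one_mul]
    exact hμ
  have hdev : ∑ i, ∑ y, w i y * (μ i y - μ i₀ y) ≤ (∑ i ∈ univ.erase i₀, α i) * t := by
    rw [← add_sum_erase _ _ (mem_univ i₀), sum_mul]
    simp only [sub_self, mul_zero, sum_const_zero, zero_add]
    gcongr with i
    exact (sum_mul_le_mul_sum_max (hw i) (hwα i)).trans
      (mul_le_mul_of_nonneg_left (ht i) (hα i))
  have hsplit : ∑ i, ∑ y, w i y * μ i y =
      ∑ i, ∑ y, w i y * μ i₀ y + ∑ i, ∑ y, w i y * (μ i y - μ i₀ y) := by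
    simp only [mul_sub, sum_sub_distrib]
    ring
  linarith

section Correlation

variable {R S P Q Y : Type*} [Fintype P] [Fintype Q] {D : R → S → P → Q → ℝ}

theorem IsCorrelation.nonempty_left [Nonempty R] [Nonempty S] (hD : IsCorrelation D) :
    Nonempty P := by
  by_contra hP
  rw [not_nonempty_iff] at hP
  simpa using hD.2 (Classical.arbitrary R) (Classical.arbitrary S)

def protocolWeight (D : R → S → P → Q → ℝ) (e : Bool → R) (g : Y → S) (h : Y → Q → Bool)
    (i : Bool × P) (y : Y) : ℝ :=
  ∑ q, D (e i.1) (g y) i.2 q * if h y q = i.1 then 1 else 0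

variable (e : Bool → R) (g : Y → S) (h : Y → Q → Bool)

theorem protocolWeight_nonneg (hD : IsCorrelation D) (i : Bool × P) (y : Y) :
    0 ≤ protocolWeight D e g h i y :=
  sum_nonneg fun _ _ => mul_nonneg (hD.1 _ _ _ _) (by positivity)

theorem protocolWeight_le (hD : IsCorrelation D) (hNS : NonSignaling D) (s₀ : S)
    (i : Bool × P) (y : Y) :
    protocolWeight D e g h i y ≤ ∑ q, D (e i.1) s₀ i.2 q := by
  rw [← hNS.1 (e i.1) i.2 (g y) s₀]
  refine sum_le_sum fun q _ => ?_
  split_ifs <;> simp [hD.1]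

theorem sum_protocolWeight (hD : IsCorrelation D) (hNS : NonSignaling D) (y : Y) :
    ∑ i, protocolWeight D e g h i y = 1 := by
  have hbob : ∀ a : Bool, ∑ p, protocolWeight D e g h (a, p) y =
      ∑ q, (∑ p, D (e false) (g y) p q) * if h y q = a then 1 else 0 := by
    intro a
    simp only [protocolWeight]
    rw [sum_comm]
    refine sum_congr rfl fun q _ => ?_
    rw [← hNS.2 (g y) q (e a) (e false), sum_mul]
  rw [Fintype.sum_prod_type, Fintype.sum_bool, hbob, hbob, ← sum_add_distrib]
  calc _ = ∑ q, ∑ p, D (e false) (g y) p q := sum_congr rfl fun q _ => by cases h y q <;> simp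
    _ = 1 := by rw [sum_comm]; exact hD.2 _ _

end Correlation

section Protocol

variable {X Y R S P Q : Type*} [Fintype Y] [Fintype P] [Fintype Q]
  {N : X → Y → ℝ} {D : R → S → P → Q → ℝ}
  (e : Bool → R) (f : Bool → P → X) (g : Y → S) (h : Y → Q → Bool)

theorem protocol_value_eq :
    (1 / 2) * ∑ a : Bool, ∑ p, ∑ y, ∑ q,
        D (e a) (g y) p q * N (f a p) y * (if h y q = a then 1 else 0) =
      (1 / 2) * ∑ i : Bool × P, ∑ y, protocolWeight D e g h i y * N (f i.1 i.2) y := by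
  simp only [protocolWeight, Fintype.sum_prod_type, sum_mul, mul_right_comm _ (N _ _)]

theorem protocol_value_le [Fintype X] [Nonempty X] [DecidableEq P] [Nonempty S]
    (hN : ∀ x, ∑ y, N x y = 1) (hD : IsCorrelation D) (hNS : NonSignaling D) :
    (1 / 2) * ∑ a : Bool, ∑ p, ∑ y, ∑ q,
        D (e a) (g y) p q * N (f a p) y * (if h y q = a then 1 else 0) ≤
      1 / 2 + (2 - 1 / (Fintype.card P : ℝ)) * (Succ N - 1 / 2) := by
  obtain ⟨s₀⟩ := ‹Nonempty S›
  have : Nonempty R := ⟨e false⟩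
  have : Nonempty P := hD.nonempty_left
  set α : Bool × P → ℝ := fun i => ∑ q, D (e i.1) s₀ i.2 q with hα
  obtain ⟨p₀, -, hp₀⟩ : ∃ p ∈ univ, 1 / (Fintype.card P : ℝ) ≤ α (false, p) := by
    refine exists_le_of_sum_le univ_nonempty ?_
    rw [sum_const, card_univ, nsmul_eq_mul, mul_one_div_cancel (by positivity)]
    exact (hD.2 (e false) s₀).ge
  have hα_erase : ∑ i ∈ univ.erase (false, p₀), α i ≤ 2 - 1 / (Fintype.card P : ℝ) := by
    rw [sum_erase_eq_sub (mem_univ _)]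
    simp only [hα, Fintype.sum_prod_type, hD.2, Fintype.sum_bool] at hp₀ ⊢
    linarith
  have hcore := sum_sum_mul_le_one_add (μ := fun i => N (f i.1 i.2))
    (t := 2 * (Succ N - 1 / 2)) (false, p₀) (protocolWeight_nonneg e g h hD)
    (protocolWeight_le e g h hD hNS s₀) (fun _ => sum_nonneg fun _ _ => hD.1 _ _ _ _)
    (sum_protocolWeight e g h hD hNS) (hN _) (fun _ => sum_max_sub_le_succ hN _ _)
  have hSucc : 0 ≤ Succ N - 1 / 2 := sub_nonneg.mpr (one_half_le_succ hN)
  rw [protocol_value_eq]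
  linarith [mul_le_mul_of_nonneg_right hα_erase hSucc]

end Protocol

/-- **Theorem 6.** For any channel `N` and non-signaling correlation `D` whose
Alice-side output alphabet `P` has size `m`,
`Succ(N, D) − 1/2 ≤ (2 − 1/m) (Succ(N) − 1/2)`. -/
theorem succD_le_bound {X Y R S P Q : Type*} [Fintype X] [Fintype Y] [Fintype R]
    [Fintype S] [Fintype P] [Fintype Q] [DecidableEq P] [DecidableEq Q]
    [DecidableEq Y] [Nonempty X] [Nonempty R] [Nonempty S]
    (N : X → Y → ℝ) (hN : IsChannel N)
    (D : R → S → P → Q → ℝ) (hD : IsCorrelation D) (hNS : NonSignaling D) :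
    SuccD N D - 1 / 2 ≤
      (2 - 1 / (Fintype.card P : ℝ)) * (Succ N - 1 / 2) := by
  have hprotocols := ciSup_le fun π : (Bool → R) × (Bool → P → X) × (Y → S) × (Y → Q → Bool) =>
    protocol_value_le π.1 π.2.1 π.2.2.1 π.2.2.2 hN.2 hD hNS
  unfold SuccD
  linarith

end
end

section
/- Let N be a classical channel with finite input alphabet X and finite output alphabet Y, let D, L, F be correlations with the same finite input alphabets R, S and output alphabets P, Q such that L is local, F is non-signaling, and D = α·L + (1−α)·F entrywise for some α ∈ [0,1]. Then Succ(N, D) ≤ α·Succ(N) + (1−α)·Succ_NS(N). -/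
open scoped Matrix Kronecker BigOperators Matrix.Norms.L2Operator ComplexOrder
open Matrix Finset

noncomputable section

/-!
The success probability of a fixed deterministic protocol is linear in the correlation, so on
`D = α L + (1 - α) F` it splits into `α` times its value on `L` plus `1 - α` times its value on
`F`. Writing the local `L` as a convex combination of local-deterministic correlations, each of
which the sender and receiver can simulate without any shared resource, bounds the first value
by `Succ N`. The second is at most `SuccD N F`, and `F` is, after relabelling its alphabets by
`Fin _`, one of the correlations over which `SuccNS N` is the supremum; that supremum is finite
because no non-signaling protocol succeeds with probability above `1`.
-/

lemma decoder_value_le_succ {X Y : Type*} [Fintype X] [Fintype Y] [Nonempty X]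
    (N : X → Y → ℝ) (x₀ x₁ : X) (c : Y → Bool) :
    (1 / 2) * (∑ y, if c y = false then N x₀ y else 0) +
      (1 / 2) * (∑ y, if c y = true then N x₁ y else 0) ≤ Succ N :=
  le_ciSup (f := fun z : X × X × (Y → Bool) =>
      (1 / 2) * (∑ y, if z.2.2 y = false then N z.1 y else 0) +
        (1 / 2) * (∑ y, if z.2.2 y = true then N z.2.1 y else 0))
    (Set.finite_range _).bddAbove (x₀, x₁, c)

abbrev Protocol (X Y R S P Q : Type*) :=
  (Bool → R) × (Bool → P → X) × (Y → S) × (Y → Q → Bool)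

section Protocol

variable {X Y R S P Q : Type*} [Fintype Y] [Fintype P] [Fintype Q]

def protocolValue (N : X → Y → ℝ) (π : Protocol X Y R S P Q) :
    (R → S → P → Q → ℝ) →ₗ[ℝ] ℝ where
  toFun D := (1 / 2) * ∑ a : Bool, ∑ p, ∑ y, ∑ q,
    D (π.1 a) (π.2.2.1 y) p q * N (π.2.1 a p) y * (if π.2.2.2 y q = a then 1 else 0)
  map_add' D₁ D₂ := by
    simp only [Pi.add_apply, add_mul, sum_add_distrib]
    ring
  map_smul' c D := by
    simp only [Pi.smul_apply, smul_eq_mul, RingHom.id_apply, mul_sum, mul_assoc, mul_left_comm c]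

lemma protocolValue_le_one [Nonempty S] {N : X → Y → ℝ} (hN : IsChannel N)
    {D : R → S → P → Q → ℝ} (hD : IsCorrelation D) (hns : NonSignaling D)
    (π : Protocol X Y R S P Q) : protocolValue N π D ≤ 1 := by
  obtain ⟨e, f, g, h⟩ := π
  have s₀ : S := Classical.arbitrary S
  have branch_le_one : ∀ a : Bool, ∑ p, ∑ y, ∑ q,
      D (e a) (g y) p q * N (f a p) y * (if h y q = a then 1 else 0) ≤ 1 := fun a =>
    calc _ ≤ ∑ p, ∑ y, ∑ q, D (e a) (g y) p q * N (f a p) y := by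
          refine sum_le_sum fun p _ => sum_le_sum fun y _ => sum_le_sum fun q _ => ?_
          exact mul_le_of_le_one_right (mul_nonneg (hD.1 _ _ _ _) (hN.1 _ _))
            (by split_ifs <;> norm_num)
      _ = ∑ p, ∑ y, (∑ q, D (e a) s₀ p q) * N (f a p) y := by
          refine sum_congr rfl fun p _ => sum_congr rfl fun y _ => ?_
          rw [← hns.1 (e a) p (g y) s₀, sum_mul]
      _ = ∑ p, ∑ q, D (e a) s₀ p q := by simp only [← mul_sum, hN.2, mul_one]
      _ = 1 := hD.2 _ _
  have := branch_le_one false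
  have := branch_le_one true
  simp only [protocolValue, LinearMap.coe_mk, AddHom.coe_mk, Fintype.sum_bool]
  linarith

variable [Fintype X] [DecidableEq P] [DecidableEq Q]

lemma protocolValue_le_succ_of_isLocalDet [Nonempty X] (N : X → Y → ℝ)
    {L : R → S → P → Q → ℝ} (hL : IsLocalDet L) (π : Protocol X Y R S P Q) :
    protocolValue N π L ≤ Succ N := by
  obtain ⟨φ, ψ, hL⟩ := hL
  obtain ⟨e, f, g, h⟩ := π
  have branch_eq : ∀ a : Bool, ∑ p, ∑ y, ∑ q,
      (if p = φ (e a) then (1 : ℝ) else 0) * (if q = ψ (g y) then 1 else 0) * N (f a p) y *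
        (if h y q = a then 1 else 0) =
      ∑ y, if h y (ψ (g y)) = a then N (f a (φ (e a))) y else 0 := fun a => by
    rw [sum_comm]
    refine sum_congr rfl fun y _ => ?_
    rw [sum_eq_single (φ (e a)) (fun p _ hp => by simp [hp]) (by simp),
      sum_eq_single (ψ (g y)) (fun q _ hq => by simp [hq]) (by simp)]
    simp
  have hval := decoder_value_le_succ N (f false (φ (e false))) (f true (φ (e true)))
    fun y => h y (ψ (g y))
  simp only [protocolValue, LinearMap.coe_mk, AddHom.coe_mk, hL, Fintype.sum_bool, branch_eq]
  linarith

lemma protocolValue_le_succ_of_isLocal [Nonempty X] (N : X → Y → ℝ)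
    {L : R → S → P → Q → ℝ} (hL : IsLocal L) (π : Protocol X Y R S P Q) :
    protocolValue N π L ≤ Succ N := by
  obtain ⟨n, w, Ld, hw0, hw1, hLd, hL⟩ := hL
  have hLsum : L = ∑ i, w i • Ld i := by
    funext r s p q
    simp [hL, Finset.sum_apply]
  calc protocolValue N π L = ∑ i, w i * protocolValue N π (Ld i) := by
        simp [hLsum, map_sum]
    _ ≤ ∑ i, w i * Succ N := by
        gcongr with i
        · exact hw0 i
        · exact protocolValue_le_succ_of_isLocalDet N (hLd i) π
    _ = Succ N := by rw [← sum_mul, hw1, one_mul]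

variable [Fintype R] [Fintype S] [DecidableEq Y] [Nonempty X] [Nonempty R] [Nonempty S]

lemma succD_eq_iSup_protocolValue (N : X → Y → ℝ) (D : R → S → P → Q → ℝ) :
    SuccD N D = ⨆ π : Protocol X Y R S P Q, protocolValue N π D := rfl

lemma protocolValue_le_succD (N : X → Y → ℝ) (D : R → S → P → Q → ℝ)
    (π : Protocol X Y R S P Q) : protocolValue N π D ≤ SuccD N D :=
  le_ciSup (f := fun π => protocolValue N π D) (Set.finite_range _).bddAbove π

lemma succD_le_one {N : X → Y → ℝ} (hN : IsChannel N) {D : R → S → P → Q → ℝ}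
    (hD : IsCorrelation D) (hns : NonSignaling D) : SuccD N D ≤ 1 :=
  ciSup_le (protocolValue_le_one hN hD hns)

end Protocol

section Relabel

variable {R S P Q R' S' P' Q' : Type*} [Fintype P] [Fintype Q] [Fintype P'] [Fintype Q']

def relabelAlphabets (D : R → S → P → Q → ℝ) (eR : R' ≃ R) (eS : S' ≃ S) (eP : P' ≃ P)
    (eQ : Q' ≃ Q) :
    R' → S' → P' → Q' → ℝ :=
  fun r s p q => D (eR r) (eS s) (eP p) (eQ q)

variable {D : R → S → P → Q → ℝ} (eR : R' ≃ R) (eS : S' ≃ S) (eP : P' ≃ P) (eQ : Q' ≃ Q)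

lemma isCorrelation_relabelAlphabets (hD : IsCorrelation D) :
    IsCorrelation (relabelAlphabets D eR eS eP eQ) :=
  ⟨fun _ _ _ _ => hD.1 _ _ _ _, fun r s => by
    simp only [relabelAlphabets, eQ.sum_comp]
    rw [eP.sum_comp (fun p => ∑ q, D (eR r) (eS s) p q)]
    exact hD.2 _ _⟩

lemma nonSignaling_relabelAlphabets (hD : NonSignaling D) :
    NonSignaling (relabelAlphabets D eR eS eP eQ) :=
  ⟨fun r p s s' => by
    simp only [relabelAlphabets, eQ.sum_comp]
    exact hD.1 _ _ _ _,
  fun s q r r' => by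
    simp only [relabelAlphabets]
    rw [eP.sum_comp (D (eR r) (eS s) · (eQ q)), eP.sum_comp (D (eR r') (eS s) · (eQ q))]
    exact hD.2 _ _ _ _⟩

lemma succD_le_succD_relabelAlphabets {X Y : Type*} [Fintype X] [Fintype Y] [Fintype R] [Fintype S]
    [Fintype R'] [Fintype S'] [DecidableEq P] [DecidableEq Q] [DecidableEq P'] [DecidableEq Q']
    [DecidableEq Y] [Nonempty X] [Nonempty R] [Nonempty S] [Nonempty R'] [Nonempty S']
    (N : X → Y → ℝ) : SuccD N D ≤ SuccD N (relabelAlphabets D eR eS eP eQ) := by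
  refine ciSup_le fun ⟨e, f, g, h⟩ => le_of_eq_of_le ?_ (protocolValue_le_succD N _
    (fun a => eR.symm (e a), fun a p => f a (eP p), fun y => eS.symm (g y),
      fun y q => h y (eQ q)))
  simp only [protocolValue, LinearMap.coe_mk, AddHom.coe_mk, relabelAlphabets,
    Equiv.apply_symm_apply]
  congr 1
  refine sum_congr rfl fun a _ => ?_
  rw [← eP.sum_comp]
  refine sum_congr rfl fun p _ => sum_congr rfl fun y _ => ?_
  rw [← eQ.sum_comp]

end Relabel

lemma succD_le_succNS {X Y R S P Q : Type*} [Fintype X] [Fintype Y] [Fintype R] [Fintype S]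
    [Fintype P] [Fintype Q] [DecidableEq P] [DecidableEq Q] [DecidableEq Y]
    [Nonempty X] [Nonempty R] [Nonempty S] {N : X → Y → ℝ} (hN : IsChannel N)
    {F : R → S → P → Q → ℝ} (hF : IsCorrelation F) (hns : NonSignaling F) :
    SuccD N F ≤ SuccNS N := by
  obtain ⟨nR, hR⟩ := Nat.exists_eq_succ_of_ne_zero (Fintype.card_ne_zero (α := R))
  obtain ⟨nS, hS⟩ := Nat.exists_eq_succ_of_ne_zero (Fintype.card_ne_zero (α := S))
  let eR := (Fintype.equivFinOfCardEq hR).symm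
  let eS := (Fintype.equivFinOfCardEq hS).symm
  let eP := (Fintype.equivFin P).symm
  let eQ := (Fintype.equivFin Q).symm
  refine (succD_le_succD_relabelAlphabets eR eS eP eQ N).trans (le_csSup ?_ ?_)
  · refine ⟨1, ?_⟩
    rintro v ⟨_, _, _, _, D, hD, hDns, rfl⟩
    exact succD_le_one hN hD hDns
  · exact ⟨nR, nS, _, _, _, isCorrelation_relabelAlphabets eR eS eP eQ hF,
      nonSignaling_relabelAlphabets eR eS eP eQ hns, rfl⟩

theorem succD_convex_bound_general {X Y R S P Q : Type*} [Fintype X] [Fintype Y] [Fintype R]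
    [Fintype S] [Fintype P] [Fintype Q] [DecidableEq P] [DecidableEq Q]
    [DecidableEq Y] [Nonempty X] [Nonempty R] [Nonempty S]
    (N : X → Y → ℝ) (hN : IsChannel N)
    (D L F : R → S → P → Q → ℝ) (α : ℝ) (hα0 : 0 ≤ α) (hα1 : α ≤ 1)
    (hLloc : IsLocal L)
    (hFcor : IsCorrelation F) (hFns : NonSignaling F)
    (hdecomp : ∀ r s p q, D r s p q = α * L r s p q + (1 - α) * F r s p q) :
    SuccD N D ≤ α * Succ N + (1 - α) * SuccNS N := by
  have hD : D = α • L + (1 - α) • F := by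
    funext r s p q
    simp [hdecomp]
  rw [succD_eq_iSup_protocolValue]
  refine ciSup_le fun π => ?_
  calc protocolValue N π D = α * protocolValue N π L + (1 - α) * protocolValue N π F := by
        simp [hD]
    _ ≤ α * Succ N + (1 - α) * SuccNS N := by
        have hβ : 0 ≤ 1 - α := by linarith
        exact add_le_add
          (mul_le_mul_of_nonneg_left (protocolValue_le_succ_of_isLocal N hLloc π) hα0)
          (mul_le_mul_of_nonneg_left
            ((protocolValue_le_succD N F π).trans (succD_le_succNS hN hFcor hFns)) hβ)

/-- If `D = α L + (1 − α) F` with `L` local and `F` non-signaling, then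
`Succ(N, D) ≤ α Succ(N) + (1 − α) Succ_NS(N)`. -/
theorem succD_convex_bound {X Y R S P Q : Type*} [Fintype X] [Fintype Y] [Fintype R]
    [Fintype S] [Fintype P] [Fintype Q] [DecidableEq P] [DecidableEq Q]
    [DecidableEq Y] [Nonempty X] [Nonempty R] [Nonempty S]
    (N : X → Y → ℝ) (hN : IsChannel N)
    (D L F : R → S → P → Q → ℝ) (α : ℝ) (hα0 : 0 ≤ α) (hα1 : α ≤ 1)
    (hD : IsCorrelation D) (hLloc : IsLocal L) (hLcor : IsCorrelation L)
    (hFcor : IsCorrelation F) (hFns : NonSignaling F)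
    (hdecomp : ∀ r s p q, D r s p q = α * L r s p q + (1 - α) * F r s p q) :
    SuccD N D ≤ α * Succ N + (1 - α) * SuccNS N :=
  succD_convex_bound_general N hN D L F α hα0 hα1 hLloc hFcor hFns hdecomp
end
end

section
/- Let M be the channel with input alphabet {1,2,3,4} and output alphabet {1,…,6} whose conditional probability rows are (1/3,0,1/3,0,1/3,0), (1/3,0,0,1/3,0,1/3), (0,1/3,1/3,0,0,1/3), (0,1/3,0,1/3,1/3,0). Then for any orthogonal projections P_1, …, P_6 on ℂ² (Hermitian with P_y² = P_y), the radius of the set { Σ_{y=1}^6 M(y|x)·P_y : x = 1,2,3,4 } is at most 1/6 + 1/(3√2). -/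
open scoped Matrix Kronecker BigOperators Matrix.Norms.L2Operator ComplexOrder
open Matrix Finset

noncomputable section

/-!
Write `u₁ = P₁ - P₂`, `u₂ = P₃ - P₄`, `u₃ = P₅ - P₆`. Measured from the centre
`(∑ P_y + C) / 6`, the four operators `∑_y M(y|x) P_y` become `(±u₁ ± u₂ ± u₃ - C) / 6` with an
even number of minus signs, so it suffices to find a Hermitian `C` within distance `1 + √2` of
these four sign sums. Whether such a `C` exists is a convex condition in each `uᵢ` separately,
and a difference of two projections on `ℂ²` is a convex combination of a scalar `σ • 1` with
`|σ| ≤ 1` and a traceless Hermitian matrix of norm at most `1`. In these extreme cases two of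
the three `uᵢ`, say `v` and `w`, are of the same kind and satisfy `‖v + w‖² + ‖v - w‖² ≤ 4`
(for traceless Hermitian matrices `‖·‖` is the Euclidean norm of the Bloch vector). For the
third one `a` the centre `C = t • a` with `t = (‖v + w‖ - ‖v - w‖) / 2` then gives the radius
`1 + (‖v + w‖ + ‖v - w‖) / 2 ≤ 1 + √2`.
-/

section HermitianCenter

variable {n : ℕ} {I J : Type*}

def HasHermitianCenter (H : I → Matrix (Fin n) (Fin n) ℂ) (r : ℝ) : Prop :=
  ∃ C : Matrix (Fin n) (Fin n) ℂ, C.IsHermitian ∧ ∀ i, ‖H i - C‖ ≤ r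

namespace HasHermitianCenter

variable {H H' : I → Matrix (Fin n) (Fin n) ℂ} {r : ℝ}

theorem mono (h : HasHermitianCenter H r) {s : ℝ} (hrs : r ≤ s) : HasHermitianCenter H s :=
  let ⟨C, hC, hH⟩ := h
  ⟨C, hC, fun i => (hH i).trans hrs⟩

theorem comp (h : HasHermitianCenter H r) (f : J → I) : HasHermitianCenter (H ∘ f) r :=
  let ⟨C, hC, hH⟩ := h
  ⟨C, hC, fun j => hH (f j)⟩

theorem add_const (h : HasHermitianCenter H r) {K : Matrix (Fin n) (Fin n) ℂ}
    (hK : K.IsHermitian) : HasHermitianCenter (fun i => H i + K) r :=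
  let ⟨C, hC, hH⟩ := h
  ⟨C + K, hC.add hK, fun i => by simpa only [add_sub_add_right_eq_sub] using hH i⟩

theorem smul (h : HasHermitianCenter H r) {c : ℝ} (hc : 0 ≤ c) :
    HasHermitianCenter (fun i => c • H i) (c * r) := by
  obtain ⟨C, hC, hH⟩ := h
  refine ⟨c • C, hC.smul (IsSelfAdjoint.all c), fun i => ?_⟩
  rw [← smul_sub, norm_smul, Real.norm_of_nonneg hc]
  exact mul_le_mul_of_nonneg_left (hH i) hc

theorem convexComb (h : HasHermitianCenter H r) (h' : HasHermitianCenter H' r) {a b : ℝ}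
    (ha : 0 ≤ a) (hb : 0 ≤ b) (hab : a + b = 1) :
    HasHermitianCenter (fun i => a • H i + b • H' i) r := by
  obtain ⟨C, hC, hH⟩ := h
  obtain ⟨C', hC', hH'⟩ := h'
  refine ⟨a • C + b • C', (hC.smul (IsSelfAdjoint.all a)).add (hC'.smul (IsSelfAdjoint.all b)),
    fun i => ?_⟩
  calc ‖a • H i + b • H' i - (a • C + b • C')‖ = ‖a • (H i - C) + b • (H' i - C')‖ := by
        rw [smul_sub, smul_sub]; abel_nf
    _ ≤ a * ‖H i - C‖ + b * ‖H' i - C'‖ := by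
        refine (norm_add_le _ _).trans_eq ?_
        rw [norm_smul, norm_smul, Real.norm_of_nonneg ha, Real.norm_of_nonneg hb]
    _ ≤ a * r + b * r := by gcongr; exacts [hH i, hH' i]
    _ = r := by rw [← add_mul, hab, one_mul]

end HasHermitianCenter

theorem matRad_le_of_hasHermitianCenter [Fintype I] [Nonempty I]
    {H : I → Matrix (Fin n) (Fin n) ℂ} {r : ℝ} (h : HasHermitianCenter H r) : matRad H ≤ r := by
  obtain ⟨C, hC, hH⟩ := h
  have hbdd : BddBelow (Set.range fun C : { C : Matrix (Fin n) (Fin n) ℂ // C.IsHermitian } =>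
      ⨆ i, ‖H i - C.1‖) := ⟨0, by
    rintro _ ⟨C', rfl⟩
    exact Real.iSup_nonneg fun i => norm_nonneg _⟩
  exact (ciInf_le hbdd ⟨C, hC⟩).trans (ciSup_le hH)

end HermitianCenter

theorem add_div_two_le_sqrt_two {x y : ℝ} (hx : 0 ≤ x) (hy : 0 ≤ y) (h : x ^ 2 + y ^ 2 ≤ 4) :
    (x + y) / 2 ≤ √2 :=
  (Real.le_sqrt (by positivity) zero_le_two).mpr (by nlinarith [sq_nonneg (x - y)])

namespace Qubit

local notation "M₂" => Matrix (Fin 2) (Fin 2) ℂ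

def evenSignSums (a b c : M₂) : Fin 4 → M₂ :=
  ![a + b + c, a - b - c, -a + b - c, -a - b + c]

theorem evenSignSums_swap_left (a b c : M₂) :
    evenSignSums a b c = evenSignSums b a c ∘ ![0, 2, 1, 3] := by
  funext i
  fin_cases i <;>
    simp only [evenSignSums, Function.comp_apply, Fin.isValue, Fin.zero_eta, Fin.mk_one,
      Fin.reduceFinMk, Matrix.cons_val_zero, Matrix.cons_val_one, Matrix.cons_val] <;> abel

theorem evenSignSums_swap_outer (a b c : M₂) :
    evenSignSums a b c = evenSignSums c b a ∘ ![0, 3, 2, 1] := by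
  funext i
  fin_cases i <;>
    simp only [evenSignSums, Function.comp_apply, Fin.isValue, Fin.zero_eta, Fin.mk_one,
      Fin.reduceFinMk, Matrix.cons_val_zero, Matrix.cons_val_one, Matrix.cons_val] <;> abel

theorem evenSignSums_convexComb_left (x y b c : M₂) {s t : ℝ} (hst : s + t = 1) :
    evenSignSums (s • x + t • y) b c =
      fun i => s • evenSignSums x b c i + t • evenSignSums y b c i := by
  obtain rfl : t = 1 - s := by linarith
  funext i
  fin_cases i <;>
    simp only [evenSignSums, Fin.isValue, Fin.zero_eta, Fin.mk_one, Fin.reduceFinMk,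
      Matrix.cons_val_zero, Matrix.cons_val_one, Matrix.cons_val] <;> module

variable {a b c : M₂} {r : ℝ}

theorem _root_.HasHermitianCenter.of_evenSignSums_swap_left
    (h : HasHermitianCenter (evenSignSums b a c) r) :
    HasHermitianCenter (evenSignSums a b c) r := by
  rw [Qubit.evenSignSums_swap_left]
  exact h.comp _

theorem _root_.HasHermitianCenter.of_evenSignSums_swap_outer
    (h : HasHermitianCenter (evenSignSums c b a) r) :
    HasHermitianCenter (evenSignSums a b c) r := by
  rw [Qubit.evenSignSums_swap_outer]
  exact h.comp _

theorem convex_setOf_hasHermitianCenter_evenSignSums (b c : M₂) (r : ℝ) :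
    Convex ℝ {a | HasHermitianCenter (evenSignSums a b c) r} := by
  intro x hx y hy s t hs ht hst
  simpa only [Set.mem_ofPred_eq, evenSignSums_convexComb_left x y b c hst] using
    hx.convexComb hy hs ht hst

theorem hasHermitianCenter_evenSignSums_of_mem_convexHull {K : Set M₂}
    (hK : ∀ a ∈ K, ∀ b ∈ K, ∀ c ∈ K, HasHermitianCenter (evenSignSums a b c) r)
    (ha : a ∈ convexHull ℝ K) (hb : b ∈ convexHull ℝ K) (hc : c ∈ convexHull ℝ K) :
    HasHermitianCenter (evenSignSums a b c) r := by
  have extend : ∀ {b c : M₂}, (∀ a ∈ K, HasHermitianCenter (evenSignSums a b c) r) →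
      ∀ a ∈ convexHull ℝ K, HasHermitianCenter (evenSignSums a b c) r :=
    fun h => convexHull_min h (convex_setOf_hasHermitianCenter_evenSignSums _ _ r)
  have hK₁ : ∀ a ∈ convexHull ℝ K, ∀ b ∈ K, ∀ c ∈ K,
      HasHermitianCenter (evenSignSums a b c) r :=
    fun a ha b hb c hc => extend (fun a' ha' => hK a' ha' b hb c hc) a ha
  have hK₂ : ∀ a ∈ convexHull ℝ K, ∀ b ∈ convexHull ℝ K, ∀ c ∈ K,
      HasHermitianCenter (evenSignSums a b c) r :=
    fun a ha b hb c hc => .of_evenSignSums_swap_left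
      (extend (fun b' hb' => .of_evenSignSums_swap_left (hK₁ a ha b' hb' c hc)) b hb)
  exact .of_evenSignSums_swap_outer
    (extend (fun c' hc' => .of_evenSignSums_swap_outer (hK₂ a ha b hb c' hc')) c hc)

/-- For a traceless Hermitian `X = x σ_z + y σ_x + z σ_y` this is `x² + y² + z²`. -/
def blochNormSq (X : M₂) : ℝ := (X 0 0).re ^ 2 + Complex.normSq (X 0 1)

theorem blochNormSq_add_add_blochNormSq_sub (X Y : M₂) :
    blochNormSq (X + Y) + blochNormSq (X - Y) = 2 * blochNormSq X + 2 * blochNormSq Y := by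
  simp only [blochNormSq, Matrix.add_apply, Matrix.sub_apply, Complex.normSq_apply,
    Complex.add_re, Complex.add_im, Complex.sub_re, Complex.sub_im]
  ring

theorem mul_self_eq_blochNormSq_smul_one {X : M₂} (hX : X.IsHermitian) (h0 : X.trace = 0) :
    X * X = blochNormSq X • (1 : M₂) := by
  have h11 : X 1 1 = -X 0 0 := by rw [Matrix.trace_fin_two] at h0; linear_combination h0
  have h10 : X 1 0 = star (X 0 1) := by rw [← hX.apply 0 1, star_star]
  have h00 : ((X 0 0).re : ℂ) = X 0 0 := hX.coe_re_apply_self 0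
  ext i j
  fin_cases i <;> fin_cases j <;>
    simp only [Matrix.mul_apply, Fin.sum_univ_two, Matrix.smul_apply, Matrix.one_apply_eq,
      Matrix.one_apply_ne, ne_eq, zero_ne_one, one_ne_zero, not_false_eq_true, smul_zero,
      blochNormSq, h10, h11, RCLike.star_def, Complex.real_smul, Complex.ofReal_add,
      Complex.ofReal_pow, mul_one, mul_neg, neg_mul, neg_neg, Fin.isValue, Fin.zero_eta, Fin.mk_one]
  · rw [h00, Complex.mul_conj]; ring
  · ring
  · ring
  · rw [h00, Complex.normSq_eq_conj_mul_self]; ring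

theorem sq_norm_eq_blochNormSq {X : M₂} (hX : X.IsHermitian) (h0 : X.trace = 0) :
    ‖X‖ ^ 2 = blochNormSq X := by
  have h := Matrix.l2_opNorm_conjTranspose_mul_self X
  have hβ : 0 ≤ blochNormSq X := add_nonneg (sq_nonneg _) (Complex.normSq_nonneg _)
  rw [hX.eq, mul_self_eq_blochNormSq_smul_one hX h0, norm_smul, norm_one, mul_one,
    Real.norm_of_nonneg hβ] at h
  rw [h, sq]

def scalarUnitBall : Set M₂ := {X | ∃ σ : ℝ, |σ| ≤ 1 ∧ X = σ • 1}

def tracelessUnitBall : Set M₂ := {X | X.IsHermitian ∧ X.trace = 0 ∧ ‖X‖ ≤ 1}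

theorem isHermitian_of_mem_scalarUnitBall {X : M₂} (hX : X ∈ scalarUnitBall) :
    X.IsHermitian := by
  obtain ⟨σ, -, rfl⟩ := hX
  exact Matrix.isHermitian_one.smul (IsSelfAdjoint.all σ)

theorem norm_le_one_of_mem_scalarUnitBall {X : M₂} (hX : X ∈ scalarUnitBall) : ‖X‖ ≤ 1 := by
  obtain ⟨σ, hσ, rfl⟩ := hX
  rwa [norm_smul, norm_one, mul_one, Real.norm_eq_abs]

theorem sq_norm_add_add_sq_norm_sub_le_four_of_mem_scalarUnitBall {X Y : M₂}
    (hX : X ∈ scalarUnitBall) (hY : Y ∈ scalarUnitBall) : ‖X + Y‖ ^ 2 + ‖X - Y‖ ^ 2 ≤ 4 := by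
  obtain ⟨σ, hσ, rfl⟩ := hX
  obtain ⟨τ, hτ, rfl⟩ := hY
  rw [← add_smul, ← sub_smul, norm_smul, norm_smul, norm_one, mul_one, mul_one,
    Real.norm_eq_abs, Real.norm_eq_abs, sq_abs, sq_abs]
  nlinarith [abs_nonneg σ, abs_nonneg τ, sq_abs σ, sq_abs τ]

theorem sq_norm_add_add_sq_norm_sub_le_four_of_mem_tracelessUnitBall {X Y : M₂}
    (hX : X ∈ tracelessUnitBall) (hY : Y ∈ tracelessUnitBall) :
    ‖X + Y‖ ^ 2 + ‖X - Y‖ ^ 2 ≤ 4 := by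
  obtain ⟨hXH, hX0, hX1⟩ := hX
  obtain ⟨hYH, hY0, hY1⟩ := hY
  rw [sq_norm_eq_blochNormSq (hXH.add hYH) (by rw [Matrix.trace_add, hX0, hY0, add_zero]),
    sq_norm_eq_blochNormSq (hXH.sub hYH) (by rw [Matrix.trace_sub, hX0, hY0, sub_zero]),
    blochNormSq_add_add_blochNormSq_sub, ← sq_norm_eq_blochNormSq hXH hX0,
    ← sq_norm_eq_blochNormSq hYH hY0]
  nlinarith [norm_nonneg X, norm_nonneg Y]

theorem hasHermitianCenter_evenSignSums_of_pivot {a b c : M₂} (ha : a.IsHermitian)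
    (ha1 : ‖a‖ ≤ 1) (hc1 : ‖c‖ ≤ 1) :
    HasHermitianCenter (evenSignSums a b c) (1 + (‖b + c‖ + ‖b - c‖) / 2) := by
  set t := (‖b + c‖ - ‖b - c‖) / 2
  have ht : |t| ≤ 1 := by
    have := abs_norm_sub_norm_le (b + c) (b - c)
    rw [show b + c - (b - c) = (2 : ℝ) • c by module, norm_smul, Real.norm_two] at this
    rw [abs_div, abs_two]; linarith
  have bound : ∀ (s : ℝ) (Z : M₂), ‖s • a + Z‖ ≤ |s| + ‖Z‖ := fun s Z =>
    (norm_add_le _ _).trans (by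
      rw [norm_smul, Real.norm_eq_abs]
      gcongr
      exact mul_le_of_le_one_right (abs_nonneg s) ha1)
  refine ⟨t • a, ha.smul (IsSelfAdjoint.all t), fun i => ?_⟩
  obtain ⟨ht₁, ht₂⟩ := abs_le.mp ht
  fin_cases i <;> simp only [evenSignSums, Fin.reduceFinMk, Matrix.cons_val]
  · rw [show a + b + c - t • a = (1 - t) • a + (b + c) by module]
    refine (bound _ _).trans_eq ?_
    rw [abs_of_nonneg (by linarith)]; ring
  · rw [show a - b - c - t • a = (1 - t) • a + -(b + c) by module]
    refine (bound _ _).trans_eq ?_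
    rw [norm_neg, abs_of_nonneg (by linarith)]; ring
  · rw [show -a + b - c - t • a = (-1 - t) • a + (b - c) by module]
    refine (bound _ _).trans_eq ?_
    rw [abs_of_nonpos (by linarith)]; ring
  · rw [show -a - b + c - t • a = (-1 - t) • a + -(b - c) by module]
    refine (bound _ _).trans_eq ?_
    rw [norm_neg, abs_of_nonpos (by linarith)]; ring

theorem hasHermitianCenter_evenSignSums_of_mem_union {a b c : M₂}
    (ha : a ∈ scalarUnitBall ∪ tracelessUnitBall) (hb : b ∈ scalarUnitBall ∪ tracelessUnitBall)
    (hc : c ∈ scalarUnitBall ∪ tracelessUnitBall) :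
    HasHermitianCenter (evenSignSums a b c) (1 + √2) := by
  have pivot : ∀ {a b c : M₂}, a.IsHermitian → ‖a‖ ≤ 1 → ‖c‖ ≤ 1 →
      ‖b + c‖ ^ 2 + ‖b - c‖ ^ 2 ≤ 4 → HasHermitianCenter (evenSignSums a b c) (1 + √2) :=
    fun ha ha1 hc1 h => (hasHermitianCenter_evenSignSums_of_pivot ha ha1 hc1).mono
      (add_le_add_right (add_div_two_le_sqrt_two (norm_nonneg _) (norm_nonneg _) h) 1)
  have hS := @isHermitian_of_mem_scalarUnitBall
  have hS1 := @norm_le_one_of_mem_scalarUnitBall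
  have hSS := @sq_norm_add_add_sq_norm_sub_le_four_of_mem_scalarUnitBall
  have hVV := @sq_norm_add_add_sq_norm_sub_le_four_of_mem_tracelessUnitBall
  rcases ha with ha | ha <;> rcases hb with hb | hb <;> rcases hc with hc | hc
  · exact pivot (hS ha) (hS1 ha) (hS1 hc) (hSS hb hc)
  · exact .of_evenSignSums_swap_outer (pivot hc.1 hc.2.2 (hS1 ha) (hSS hb ha))
  · exact .of_evenSignSums_swap_left (pivot hb.1 hb.2.2 (hS1 hc) (hSS ha hc))
  · exact pivot (hS ha) (hS1 ha) hc.2.2 (hVV hb hc)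
  · exact pivot ha.1 ha.2.2 (hS1 hc) (hSS hb hc)
  · exact .of_evenSignSums_swap_left (pivot (hS hb) (hS1 hb) hc.2.2 (hVV ha hc))
  · exact .of_evenSignSums_swap_outer (pivot (hS hc) (hS1 hc) ha.2.2 (hVV hb ha))
  · exact pivot ha.1 ha.2.2 hc.2.2 (hVV hb hc)

theorem exists_eq_smul_one_add_traceless {Q : M₂} (hQ : Q.IsHermitian)
    (hQQ : IsIdempotentElem Q) :
    ∃ (m : ℝ) (D : M₂), Q = m • 1 + D ∧ D.IsHermitian ∧ D.trace = 0 ∧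
      |m - 1 / 2| + ‖D‖ = 1 / 2 := by
  obtain ⟨m, hm⟩ : ∃ m : ℝ, m = ((Q 0 0).re + (Q 1 1).re) / 2 := ⟨_, rfl⟩
  obtain ⟨D, hQD⟩ : ∃ D : M₂, Q = m • 1 + D := ⟨Q - m • 1, (add_sub_cancel _ _).symm⟩
  have hD : D.IsHermitian := by
    simpa only [hQD, add_sub_cancel_left] using
      hQ.sub (Matrix.isHermitian_one.smul (IsSelfAdjoint.all m))
  have hD0 : D.trace = 0 := by
    rw [show D = Q - m • 1 by rw [hQD, add_sub_cancel_left], Matrix.trace_sub, Matrix.trace_smul,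
      Matrix.trace_one, Matrix.trace_fin_two, Fintype.card_fin, ← hQ.coe_re_apply_self 0,
      ← hQ.coe_re_apply_self 1, hm]
    simp [Complex.real_smul]
  have hDD := mul_self_eq_blochNormSq_smul_one hD hD0
  -- `Q² = Q` turns into a scalar part and a traceless part, which must vanish separately.
  have hE : (m ^ 2 + blochNormSq D - m) • (1 : M₂) + (2 * m - 1) • D = 0 := by
    have h : Q * Q = Q := hQQ
    rw [hQD, add_mul, mul_add, mul_add, hDD] at h
    simp only [smul_mul_assoc, mul_smul_comm, one_mul, mul_one, smul_smul] at h
    linear_combination (norm := module) h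
  have hβ : blochNormSq D = m - m ^ 2 := by
    have h := congrArg Matrix.trace hE
    rw [Matrix.trace_add, Matrix.trace_smul, Matrix.trace_smul, Matrix.trace_one, hD0, smul_zero,
      add_zero, Matrix.trace_zero, smul_eq_zero] at h
    rcases h with h | h
    · linarith
    · norm_num at h
  have hnorm : ‖D‖ ^ 2 = m - m ^ 2 := by rw [sq_norm_eq_blochNormSq hD hD0, hβ]
  refine ⟨m, D, hQD, hD, hD0, ?_⟩
  rw [hβ, show m ^ 2 + (m - m ^ 2) - m = 0 by ring, zero_smul, zero_add, smul_eq_zero] at hE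
  rcases hE with hm | rfl
  · rw [show m = 1 / 2 by linarith] at hnorm ⊢
    rw [sub_self, abs_zero, zero_add]
    exact (pow_left_inj₀ (norm_nonneg D) (by norm_num) two_ne_zero).mp (by rw [hnorm]; norm_num)
  · rw [norm_zero] at hnorm ⊢
    have : m * (1 - m) = 0 := by linarith
    rcases mul_eq_zero.mp this with h | h
    · rw [h]; norm_num
    · rw [show m = 1 by linarith]; norm_num

theorem smul_one_add_mem_convexHull {a : ℝ} {B : M₂} (hB : B.IsHermitian) (hB0 : B.trace = 0)
    (h : |a| + ‖B‖ ≤ 1) : a • 1 + B ∈ convexHull ℝ (scalarUnitBall ∪ tracelessUnitBall) := by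
  have hB' : (1 - |a|) • (1 - |a|)⁻¹ • B = B := by
    rcases eq_or_ne (1 - |a|) 0 with ha | ha
    · rw [norm_le_zero_iff.mp (show ‖B‖ ≤ 0 by linarith), smul_zero, smul_zero]
    · rw [smul_smul, mul_inv_cancel₀ ha, one_smul]
  have hX : (SignType.sign a : ℝ) • (1 : M₂) ∈ scalarUnitBall ∪ tracelessUnitBall :=
    Or.inl ⟨SignType.sign a, by rcases SignType.sign a with _ | _ | _ <;> simp, rfl⟩
  have hY : (1 - |a|)⁻¹ • B ∈ scalarUnitBall ∪ tracelessUnitBall := by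
    refine Or.inr ⟨hB.smul (IsSelfAdjoint.all _), by rw [Matrix.trace_smul, hB0, smul_zero], ?_⟩
    rw [norm_smul, Real.norm_eq_abs, abs_inv, abs_of_nonneg (by linarith [norm_nonneg B])]
    exact inv_mul_le_one_of_le₀ (by linarith) (by linarith [norm_nonneg B])
  have := convex_convexHull ℝ (scalarUnitBall ∪ tracelessUnitBall) (subset_convexHull ℝ _ hX)
    (subset_convexHull ℝ _ hY) (abs_nonneg a) (by linarith [norm_nonneg B]) (add_sub_cancel _ _)
  rwa [hB', smul_smul, abs_mul_sign] at this

theorem sub_mem_convexHull_of_isIdempotentElem {Q R : M₂} (hQ : Q.IsHermitian)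
    (hQQ : IsIdempotentElem Q) (hR : R.IsHermitian) (hRR : IsIdempotentElem R) :
    Q - R ∈ convexHull ℝ (scalarUnitBall ∪ tracelessUnitBall) := by
  obtain ⟨m, D, rfl, hD, hD0, hmD⟩ := exists_eq_smul_one_add_traceless hQ hQQ
  obtain ⟨m', D', rfl, hD', hD0', hmD'⟩ := exists_eq_smul_one_add_traceless hR hRR
  rw [show m • (1 : M₂) + D - (m' • 1 + D') = (m - m') • 1 + (D - D') by module]
  refine smul_one_add_mem_convexHull (hD.sub hD')
    (by rw [Matrix.trace_sub, hD0, hD0', sub_zero]) ?_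
  have := abs_sub_le m (1 / 2) m'
  rw [abs_sub_comm (1 / 2)] at this
  linarith [norm_sub_le D D']

theorem hasHermitianCenter_evenSignSums_of_mem_convexHull_union {a b c : M₂}
    (ha : a ∈ convexHull ℝ (scalarUnitBall ∪ tracelessUnitBall))
    (hb : b ∈ convexHull ℝ (scalarUnitBall ∪ tracelessUnitBall))
    (hc : c ∈ convexHull ℝ (scalarUnitBall ∪ tracelessUnitBall)) :
    HasHermitianCenter (evenSignSums a b c) (1 + √2) :=
  hasHermitianCenter_evenSignSums_of_mem_convexHull
    (fun _ ha _ hb _ hc => hasHermitianCenter_evenSignSums_of_mem_union ha hb hc) ha hb hc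

end Qubit

/-- For the Prevedel et al. channel `M` and any orthogonal projections
`P_1, …, P_6` on `ℂ²`, the radius of `{ ∑_y M(y|x) P_y : x }` is at most
`1/6 + 1/(3√2)`. -/
theorem mchan_radius_le (P : Fin 6 → Matrix (Fin 2) (Fin 2) ℂ)
    (hHerm : ∀ y, (P y).IsHermitian) (hProj : ∀ y, P y * P y = P y) :
    matRad (fun x => ∑ y, (Mchan x y : ℂ) • P y) ≤
      1 / 6 + 1 / (3 * Real.sqrt 2) := by
  have hdiff : ∀ y y', P y - P y' ∈
      convexHull ℝ (Qubit.scalarUnitBall ∪ Qubit.tracelessUnitBall) := fun y y' =>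
    Qubit.sub_mem_convexHull_of_isIdempotentElem (hHerm y) (hProj y) (hHerm y') (hProj y')
  have hcenter := Qubit.hasHermitianCenter_evenSignSums_of_mem_convexHull_union
    (hdiff 0 1) (hdiff 2 3) (hdiff 4 5)
  have hfamily : (fun x => ∑ y, (Mchan x y : ℂ) • P y) = fun x =>
      (6⁻¹ : ℝ) • (Qubit.evenSignSums (P 0 - P 1) (P 2 - P 3) (P 4 - P 5) x + ∑ y, P y) := by
    funext x
    fin_cases x <;>
      simp only [Mchan, Qubit.evenSignSums, Fin.sum_univ_six, Complex.coe_smul, one_div, zero_smul,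
        zero_add, add_zero, Matrix.cons_val', Matrix.cons_val_fin_one, Fin.isValue, Fin.zero_eta,
        Fin.mk_one, Fin.reduceFinMk, Matrix.cons_val_zero, Matrix.cons_val_one, Matrix.cons_val] <;>
      module
  have hradius : (6⁻¹ : ℝ) * (1 + √2) = 1 / 6 + 1 / (3 * √2) := by
    field_simp
    linear_combination 3 * Real.sq_sqrt (zero_le_two : (0 : ℝ) ≤ 2)
  rw [hfamily, ← hradius]
  exact matRad_le_of_hasHermitianCenter
    ((hcenter.add_const (isSelfAdjoint_sum _ fun y _ => hHerm y)).smul (by norm_num))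
end
end

section
/- Let s ≥ 1 and let T be the channel with input alphabet {0,1,…,2^s−1} and output alphabet {1,…,2^s−1}×{0,1} defined by T((j,t)|i) = (2^s−1)^{-1}·[b_i·b_j = t], where b_i ∈ F_2^s is the binary representation of i and b_i·b_j is the mod-2 inner product. Then the ℓ¹-diameter of { ℓ_i : 0 ≤ i ≤ 2^s−1 } equals 2^s/(2^s−1), and consequently Succ(T) = 1/2 + 2^{s−2}/(2^s−1). -/
open scoped Matrix Kronecker BigOperators Matrix.Norms.L2Operator ComplexOrder
open Matrix Finset

noncomputable section

/-! A one-shot strategy for a channel `N` picks two inputs `x₀, x₁`; its best decoder is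
maximum likelihood, which succeeds with probability `½ ∑_y max (N x₀ y) (N x₁ y) =
½ + ¼ ‖ℓ_{x₀} - ℓ_{x₁}‖₁`, so `Succ N = ½ + ¼ Diam₁`. For `T` and `i ≠ i'`, the distributions
`ℓ_i` and `ℓ_{i'}` differ, by `2 / (2^s - 1)` in `ℓ¹`, exactly at the `j` with
`b_i · b_j ≠ b_{i'} · b_j`. These are half of all `j ∈ 𝔽₂^s`: flipping a coordinate where
`b_i` and `b_{i'}` differ exchanges agreement and disagreement. Hence
`Diam₁ = 2^s / (2^s - 1)`. -/

theorem ite_eq_false_add_ite_eq_true_le_max (g : Bool) (a b : ℝ) :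
    (if g = false then a else 0) + (if g = true then b else 0) ≤ max a b := by
  cases g <;> simp

theorem ite_decide_lt_add_ite_decide_lt_eq_max (a b : ℝ) :
    (if decide (a < b) = false then a else 0) + (if decide (a < b) = true then b else 0) =
      max a b := by
  by_cases h : a < b
  · simp [h, h.le]
  · simp [h, le_of_not_gt h]

section SuccessProbability

variable {X Y : Type*} [Fintype Y] {N : X → Y → ℝ}

theorem IsChannel.sum_max_eq_one_add_l1_div_two (hN : IsChannel N) (x₀ x₁ : X) :
    ∑ y, max (N x₀ y) (N x₁ y) = 1 + (∑ y, |N x₀ y - N x₁ y|) / 2 := by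
  have hmax : ∀ a b : ℝ, max a b = (a + b + |a - b|) / 2 := fun a b => by
    linarith [min_add_max a b, max_sub_min_eq_abs' a b]
  simp only [hmax, ← sum_div, sum_add_distrib, hN.2]
  ring

theorem half_mul_add_half_mul_eq_sum_div_two (x₀ x₁ : X) (g : Y → Bool) :
    (1 / 2) * (∑ y, if g y = false then N x₀ y else 0) +
        (1 / 2) * (∑ y, if g y = true then N x₁ y else 0) =
      (∑ y, ((if g y = false then N x₀ y else 0) + (if g y = true then N x₁ y else 0))) / 2 := by
  rw [sum_add_distrib]; ring

theorem IsChannel.succ_eq_half_add_diam_div_four [Fintype X] [Nonempty X] (hN : IsChannel N) :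
    Succ N = 1 / 2 + (⨆ p : X × X, ∑ y, |N p.1 y - N p.2 y|) / 4 := by
  set dist : X × X → ℝ := fun p => ∑ y, |N p.1 y - N p.2 y|
  obtain ⟨p, hp⟩ := exists_eq_ciSup_of_finite (f := dist)
  refine le_antisymm (ciSup_le fun ⟨x₀, x₁, g⟩ => ?_) ?_
  · rw [half_mul_add_half_mul_eq_sum_div_two]
    calc _ ≤ (∑ y, max (N x₀ y) (N x₁ y)) / 2 := by
          gcongr with y; exact ite_eq_false_add_ite_eq_true_le_max _ _ _
      _ = 1 / 2 + dist (x₀, x₁) / 4 := by rw [hN.sum_max_eq_one_add_l1_div_two]; ring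
      _ ≤ 1 / 2 + (⨆ p, dist p) / 4 := by
          gcongr; exact le_ciSup (Set.finite_range dist).bddAbove _
  · refine le_ciSup_of_le (Set.finite_range _).bddAbove
      (p.1, p.2, fun y => decide (N p.1 y < N p.2 y)) (le_of_eq ?_)
    simp only [half_mul_add_half_mul_eq_sum_div_two, ite_decide_lt_add_ite_decide_lt_eq_max,
      hN.sum_max_eq_one_add_l1_div_two, ← hp]
    ring

end SuccessProbability

theorem two_mul_card_filter_of_involutive {α : Type*} (S : Finset α) (p : α → Prop)
    [DecidablePred p] {σ : α → α} (hσ : Function.Involutive σ) (hS : ∀ x ∈ S, σ x ∈ S)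
    (hp : ∀ x, p (σ x) ↔ ¬ p x) :
    2 * #(S.filter p) = #S := by
  have hswap : #(S.filter p) = #(S.filter fun x => ¬ p x) := by
    refine card_nbij' σ σ ?_ ?_ (fun x _ => hσ x) (fun x _ => hσ x) <;>
      intro x hx <;> simp only [coe_filter, Set.mem_ofPred_eq] at hx ⊢
    · exact ⟨hS x hx.1, fun h => (hp x).1 h hx.2⟩
    · exact ⟨hS x hx.1, (hp x).2 hx.2⟩
  rw [← card_filter_add_card_filter_not (s := S) p, ← hswap, two_mul]

theorem binIP_eq_decide_sum (s i j : ℕ) :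
    binIP s i j = decide ((∑ k ∈ range s,
      if i.testBit k ∧ j.testBit k then (1 : ZMod 2) else 0) = 1) := by
  rw [binIP, sum_boole, decide_eq_decide, ZMod.natCast_eq_one_iff_odd, Nat.odd_iff]

theorem binIP_xor_right (s i j j' : ℕ) :
    binIP s i (j ^^^ j') = (binIP s i j ^^ binIP s i j') := by
  have hterm : ∀ k, (if i.testBit k ∧ (j ^^^ j').testBit k then (1 : ZMod 2) else 0) =
      (if i.testBit k ∧ j.testBit k then 1 else 0) +
        (if i.testBit k ∧ j'.testBit k then 1 else 0) := fun k => by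
    rw [Nat.testBit_xor]
    cases i.testBit k <;> cases j.testBit k <;> cases j'.testBit k <;> decide
  simp only [binIP_eq_decide_sum, hterm, sum_add_distrib]
  generalize (∑ k ∈ range s, if i.testBit k ∧ j.testBit k then (1 : ZMod 2) else 0) = a
  generalize (∑ k ∈ range s, if i.testBit k ∧ j'.testBit k then (1 : ZMod 2) else 0) = b
  revert a b; decide

theorem binIP_two_pow_right {s k : ℕ} (hk : k < s) (i : ℕ) :
    binIP s i (2 ^ k) = i.testBit k := by
  simp only [binIP_eq_decide_sum, Nat.testBit_two_pow, decide_eq_true_eq]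
  simp only [fun x => and_comm (a := i.testBit x = true) (b := k = x), ite_and, sum_ite_eq,
    mem_range.2 hk, if_true]
  cases i.testBit k <;> decide

theorem binIP_zero_right (s i : ℕ) : binIP s i 0 = false := by
  simp [binIP]

theorem two_mul_card_filter_binIP_ne {s a b : ℕ} (ha : a < 2 ^ s) (hb : b < 2 ^ s)
    (hab : a ≠ b) :
    2 * #((range (2 ^ s)).filter fun m => binIP s a m ≠ binIP s b m) = 2 ^ s := by
  obtain ⟨k, hk⟩ := Nat.exists_testBit_ne_of_ne hab
  have hks : k < s := by
    by_contra! h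
    have h2 : 2 ^ s ≤ 2 ^ k := Nat.pow_le_pow_right two_pos h
    exact hk ((Nat.testBit_lt_two_pow (ha.trans_le h2)).trans
      (Nat.testBit_lt_two_pow (hb.trans_le h2)).symm)
  refine (two_mul_card_filter_of_involutive _ _ (σ := fun m => m ^^^ 2 ^ k)
    (fun m => xor_cancel_right m (2 ^ k)) (fun m hm => ?_) (fun m => ?_)).trans (card_range _)
  · exact mem_range.2 (Nat.xor_lt_two_pow (mem_range.1 hm) (Nat.pow_lt_pow_right one_lt_two hks))
  · simp only [binIP_xor_right, binIP_two_pow_right hks]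
    revert hk
    cases a.testBit k <;> cases b.testBit k <;> cases binIP s a m <;> cases binIP s b m <;> decide

theorem sum_fin_sub_one_eq_sum_range {M : Type*} [AddCommMonoid M] {n : ℕ} (hn : 1 ≤ n)
    (f : ℕ → M) (hf : f 0 = 0) :
    ∑ j : Fin (n - 1), f (j + 1) = ∑ m ∈ range n, f m := by
  obtain ⟨n, rfl⟩ := Nat.exists_eq_add_of_le' hn
  rw [Nat.add_sub_cancel, sum_range_succ', hf, add_zero,
    Fin.sum_univ_eq_sum_range (fun j => f (j + 1))]

theorem ciSup_ite_eq_zero_else {ι : Type*} [Finite ι] [Nontrivial ι] [DecidableEq ι]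
    {c : ℝ} (hc : 0 ≤ c) :
    ⨆ p : ι × ι, (if p.1 = p.2 then 0 else c) = c := by
  obtain ⟨a, b, hab⟩ := exists_pair_ne ι
  refine le_antisymm (ciSup_le fun p => ?_) ?_
  · split_ifs <;> simp [hc]
  · exact le_ciSup_of_le (Set.finite_range _).bddAbove (a, b) (by simp [hab])

theorem sum_bool_abs_ite_sub_ite (a b : Bool) {c : ℝ} (hc : 0 ≤ c) :
    ∑ t, |(if a = t then c else 0) - (if b = t then c else 0)| = if a = b then 0 else 2 * c := by
  cases a <;> cases b <;> simp [abs_of_nonneg hc] <;> ring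

theorem two_pow_sub_one_nonneg (s : ℕ) : (0 : ℝ) ≤ 2 ^ s - 1 :=
  sub_nonneg.2 (one_le_pow₀ one_le_two)

section Tchan

variable {s : ℕ}

theorem sum_bool_tchan (i : Fin (2 ^ s)) (j : Fin (2 ^ s - 1)) :
    ∑ t, Tchan s i (j, t) = ((2 : ℝ) ^ s - 1)⁻¹ :=
  Fintype.sum_ite_eq (binIP s i (j + 1)) fun _ => ((2 : ℝ) ^ s - 1)⁻¹

theorem isChannel_tchan (hs : 1 ≤ s) : IsChannel (Tchan s) := by
  refine ⟨fun i jt => ?_, fun i => ?_⟩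
  · unfold Tchan; split_ifs
    exacts [inv_nonneg.2 (two_pow_sub_one_nonneg s), le_rfl]
  · rw [Fintype.sum_prod_type, sum_congr rfl fun j _ => sum_bool_tchan i j, sum_const,
      card_univ, Fintype.card_fin, nsmul_eq_mul, Nat.cast_sub Nat.one_le_two_pow]
    push_cast
    refine mul_inv_cancel₀ (sub_ne_zero.2 (one_lt_pow₀ one_lt_two ?_).ne')
    omega

theorem sum_bool_abs_sub_tchan (i i' : Fin (2 ^ s)) (j : Fin (2 ^ s - 1)) :
    ∑ t, |Tchan s i (j, t) - Tchan s i' (j, t)| =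
      if binIP s i (j + 1) = binIP s i' (j + 1) then 0 else 2 * ((2 : ℝ) ^ s - 1)⁻¹ :=
  sum_bool_abs_ite_sub_ite _ _ (inv_nonneg.2 (two_pow_sub_one_nonneg s))

theorem l1_dist_tchan (i i' : Fin (2 ^ s)) :
    ∑ jt, |Tchan s i jt - Tchan s i' jt| = if i = i' then 0 else 2 ^ s / ((2 : ℝ) ^ s - 1) := by
  split_ifs with hii
  · simp [hii]
  rw [Fintype.sum_prod_type, sum_congr rfl fun j _ => sum_bool_abs_sub_tchan i i' j,
    sum_fin_sub_one_eq_sum_range Nat.one_le_two_pow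
      (fun m => if binIP s i m = binIP s i' m then 0 else 2 * ((2 : ℝ) ^ s - 1)⁻¹)
      (by simp [binIP_zero_right]),
    sum_ite, sum_const_zero, zero_add, sum_const, nsmul_eq_mul]
  have hcard := congrArg (Nat.cast (R := ℝ))
    (two_mul_card_filter_binIP_ne i.isLt i'.isLt (Fin.val_ne_of_ne hii))
  push_cast at hcard
  linear_combination ((2 : ℝ) ^ s - 1)⁻¹ * hcard

theorem ciSup_l1_dist_tchan (hs : 1 ≤ s) :
    ⨆ p : Fin (2 ^ s) × Fin (2 ^ s), ∑ jt, |Tchan s p.1 jt - Tchan s p.2 jt| =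
      2 ^ s / ((2 : ℝ) ^ s - 1) := by
  have : Nontrivial (Fin (2 ^ s)) :=
    Fin.nontrivial_iff_two_le.2 (by simpa using Nat.pow_le_pow_right two_pos hs)
  simp only [l1_dist_tchan]
  exact ciSup_ite_eq_zero_else (div_nonneg (by positivity) (two_pow_sub_one_nonneg s))

end Tchan

/-- For the channel `T`, the `ℓ¹`-diameter of the output distributions
`{ ℓ_i }` is `2^s / (2^s − 1)`, and hence
`Succ(T) = 1/2 + 2^{s−2} / (2^s − 1)`. -/
theorem tchan_diam_and_succ (s : ℕ) (hs : 1 ≤ s) :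
    ((⨆ p : Fin (2 ^ s) × Fin (2 ^ s),
        ∑ jt, |Tchan s p.1 jt - Tchan s p.2 jt|) =
      (2 : ℝ) ^ s / ((2 : ℝ) ^ s - 1)) ∧
      Succ (Tchan s) = 1 / 2 + (2 : ℝ) ^ s / (4 * ((2 : ℝ) ^ s - 1)) := by
  refine ⟨ciSup_l1_dist_tchan hs, ?_⟩
  rw [(isChannel_tchan hs).succ_eq_half_add_diam_div_four, ciSup_l1_dist_tchan hs, div_div, mul_comm]

end
end

section
/- Let s ≥ 1 and let ℓ_i ∈ ℝ^{{1,…,2^s−1}×{0,1}} (for 0 ≤ i ≤ 2^s−1) be defined by ℓ_i(j,t) = (2^s−1)^{-1}·[b_i·b_j = t], where b_i ∈ F_2^s is the binary representation of i and b_i·b_j is the mod-2 inner product. Then for every c ∈ ℝ^{{1,…,2^s−1}×{0,1}}, max_{0 ≤ i ≤ 2^s−1} ‖ℓ_i − c‖₁ ≥ 1; in particular the ℓ¹-radius Rad₁{ ℓ_i : 0 ≤ i ≤ 2^s−1 } is at least 1. -/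
open scoped Matrix Kronecker BigOperators Matrix.Norms.L2Operator ComplexOrder
open Matrix Finset

noncomputable section

/-!
Fix an output coordinate `(j, t)` and a bit `k` set in `j`. Flipping bit `k` of the input `i`
flips `b_i · b_j`, so `ℓ_i (j, t)` and `ℓ_{i ⊕ 2^k} (j, t)` differ by `(2^s - 1)⁻¹`; as
`i ↦ i ⊕ 2^k` is a permutation, the triangle inequality through `c (j, t)` gives
`∑_i |ℓ_i (j, t) - c (j, t)| ≥ 2^s (2^s - 1)⁻¹ / 2`. Summing over the `2 (2^s - 1)`
coordinates, `∑_i ‖ℓ_i - c‖₁ ≥ 2^s`, so the largest of these `2^s` distances is at least `1`.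
-/

theorem Finset.odd_card_filter_add_card_filter {α : Type*} [DecidableEq α] {S : Finset α}
    {k : α} (hk : k ∈ S) {p q : α → Prop} [DecidablePred p] [DecidablePred q]
    (hpq : ∀ m ≠ k, p m ↔ q m) (hpk : p k ↔ ¬q k) :
    Odd (#(S.filter p) + #(S.filter q)) := by
  rw [card_filter, card_filter, ← add_sum_erase S _ hk, ← add_sum_erase S _ hk,
    sum_congr rfl fun m hm => if_congr (hpq m (ne_of_mem_erase hm)) rfl rfl, Nat.odd_iff]
  by_cases hq : q k <;> simp [hq, hpk] <;> omega

theorem sum_abs_sub_comp_perm_le {ι : Type*} [Fintype ι] (σ : Equiv.Perm ι) (g : ι → ℝ)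
    (c : ℝ) : ∑ i, |g i - g (σ i)| ≤ 2 * ∑ i, |g i - c| :=
  calc ∑ i, |g i - g (σ i)| ≤ ∑ i, (|g i - c| + |g (σ i) - c|) :=
        sum_le_sum fun i _ => abs_sub_comm (g (σ i)) c ▸ abs_sub_le _ _ _
    _ = 2 * ∑ i, |g i - c| := by
        rw [sum_add_distrib, Equiv.sum_comp σ fun i => |g i - c|]; ring

theorem le_ciSup_of_card_mul_le_sum {ι : Type*} [Fintype ι] [Nonempty ι] {f : ι → ℝ}
    {a : ℝ} (h : Fintype.card ι * a ≤ ∑ i, f i) : a ≤ ⨆ i, f i := by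
  obtain ⟨i, -, hi⟩ := exists_le_of_sum_le univ_nonempty (f := fun _ => a) (by simpa using h)
  exact hi.trans (le_ciSup (Set.finite_range f).bddAbove i)

theorem Nat.exists_lt_testBit_of_ne_zero {j s : ℕ} (hj0 : j ≠ 0) (hjs : j < 2 ^ s) :
    ∃ k < s, j.testBit k := by
  obtain ⟨k, hk⟩ := Nat.exists_testBit_of_ne_zero hj0
  refine ⟨k, ?_, hk⟩
  by_contra! hsk
  simp [Nat.testBit_lt_two_pow (hjs.trans_le (Nat.pow_le_pow_right two_pos hsk))] at hk

def Fin.xorPerm (s x : ℕ) (hx : x < 2 ^ s) : Equiv.Perm (Fin (2 ^ s)) :=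
  Function.Involutive.toPerm (fun i => ⟨i ^^^ x, Nat.xor_lt_two_pow i.isLt hx⟩)
    fun i => Fin.ext (by simp)

@[simp]
theorem Fin.val_xorPerm (s x : ℕ) (hx : x < 2 ^ s) (i : Fin (2 ^ s)) :
    (Fin.xorPerm s x hx i).val = i.val ^^^ x :=
  rfl

theorem binIP_xor_two_pow {s k : ℕ} (hk : k < s) (i : ℕ) {j : ℕ} (hj : j.testBit k) :
    binIP s (i ^^^ 2 ^ k) j = !binIP s i j := by
  have hodd := Finset.odd_card_filter_add_card_filter (mem_range.2 hk)
    (p := fun m => (i ^^^ 2 ^ k).testBit m ∧ j.testBit m)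
    (q := fun m => i.testBit m ∧ j.testBit m)
    (fun m hm => by simp [Nat.testBit_xor, Ne.symm hm])
    (by simp [Nat.testBit_xor, hj])
  rw [Nat.odd_iff] at hodd
  simp only [binIP, ← decide_not]
  exact decide_eq_decide.2 (by omega)

theorem abs_Tchan_sub_Tchan_xorPerm {s k : ℕ} (hk : k < s) {jt : Fin (2 ^ s - 1) × Bool}
    (hjk : (jt.1.val + 1).testBit k) (i : Fin (2 ^ s)) :
    |Tchan s i jt - Tchan s (Fin.xorPerm s (2 ^ k) (Nat.pow_lt_pow_right one_lt_two hk) i) jt|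
      = ((2 : ℝ) ^ s - 1)⁻¹ := by
  have hr : (0 : ℝ) ≤ ((2 : ℝ) ^ s - 1)⁻¹ :=
    inv_nonneg.2 (sub_nonneg.2 (one_le_pow₀ one_le_two))
  simp only [Tchan, Fin.val_xorPerm, binIP_xor_two_pow hk i.val hjk]
  cases binIP s i (jt.1 + 1) <;> cases jt.2 <;> simp [abs_of_nonneg hr]

theorem two_pow_mul_inv_le_two_mul_sum_abs_Tchan_sub (s : ℕ) (jt : Fin (2 ^ s - 1) × Bool)
    (c : ℝ) : (2 : ℝ) ^ s * ((2 : ℝ) ^ s - 1)⁻¹ ≤ 2 * ∑ i, |Tchan s i jt - c| := by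
  obtain ⟨k, hk, hjk⟩ := Nat.exists_lt_testBit_of_ne_zero (j := jt.1.val + 1) (s := s)
    (by omega) (by have := jt.1.isLt; omega)
  set σ := Fin.xorPerm s (2 ^ k) (Nat.pow_lt_pow_right one_lt_two hk)
  calc (2 : ℝ) ^ s * ((2 : ℝ) ^ s - 1)⁻¹ = ∑ i, |Tchan s i jt - Tchan s (σ i) jt| := by
        simp [σ, abs_Tchan_sub_Tchan_xorPerm hk hjk]
    _ ≤ 2 * ∑ i, |Tchan s i jt - c| := sum_abs_sub_comp_perm_le _ _ _

theorem two_pow_le_sum_sum_abs_Tchan_sub {s : ℕ} (hs : 1 ≤ s)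
    (c : Fin (2 ^ s - 1) × Bool → ℝ) :
    (2 : ℝ) ^ s ≤ ∑ i, ∑ jt, |Tchan s i jt - c jt| := by
  have hr : (2 : ℝ) ^ s - 1 ≠ 0 := sub_ne_zero.2 (one_lt_pow₀ one_lt_two (by omega)).ne'
  have hcard : (Fintype.card (Fin (2 ^ s - 1) × Bool) : ℝ) = 2 * ((2 : ℝ) ^ s - 1) := by
    simp [Nat.cast_sub Nat.one_le_two_pow]; ring
  rw [sum_comm]
  calc (2 : ℝ) ^ s
      = Fintype.card (Fin (2 ^ s - 1) × Bool) •
          ((2 : ℝ) ^ s * ((2 : ℝ) ^ s - 1)⁻¹ / 2) := by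
        rw [nsmul_eq_mul, hcard]; field_simp
    _ ≤ _ := card_nsmul_le_sum _ _ _ fun jt _ => by
        linarith [two_pow_mul_inv_le_two_mul_sum_abs_Tchan_sub s jt (c jt)]

/-- For the output distributions `ℓ_i` of the channel `T` and any
`c ∈ ℝ^{{1,…,2^s−1}×{0,1}}`, we have `max_i ‖ℓ_i − c‖₁ ≥ 1`; in particular
the `ℓ¹`-radius of `{ ℓ_i }` is at least `1`. -/
theorem tchan_radius_ge_one (s : ℕ) (hs : 1 ≤ s) :
    (∀ c : Fin (2 ^ s - 1) × Bool → ℝ,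
        1 ≤ ⨆ i : Fin (2 ^ s), ∑ jt, |Tchan s i jt - c jt|) ∧
      1 ≤ ⨅ c : Fin (2 ^ s - 1) × Bool → ℝ,
            ⨆ i : Fin (2 ^ s), ∑ jt, |Tchan s i jt - c jt| := by
  have hmax : ∀ c : Fin (2 ^ s - 1) × Bool → ℝ,
      1 ≤ ⨆ i : Fin (2 ^ s), ∑ jt, |Tchan s i jt - c jt| := fun c =>
    le_ciSup_of_card_mul_le_sum (by simpa using two_pow_le_sum_sum_abs_Tchan_sub hs c)
  exact ⟨hmax, le_ciInf hmax⟩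

end
end
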